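/- arXiv:1308.3509 — 8 statements merged into one kernel-verified Lean document; each statement's English description precedes it below -/
import Mathlib

section
/- Let H be a real inner product space, w ∈ H, and let x₁,…,xₙ ∈ H with labels yᵢ ∈ {±1}. Define hᵢ = min(1, yᵢ⟨w, xᵢ⟩). Suppose w̃ ∈ H satisfies: for every i with hᵢ > 0, hᵢ - yᵢ⟨w̃, xᵢ⟩ ≤ 1/2. Then for every i, ℓ_slant(yᵢ⟨w̃, xᵢ⟩) ≤ ℓ_hinge(yᵢ⟨w, xᵢ⟩), where ℓ_slant(z) = min(1, max(0, 1/2 - z)) and ℓ_hinge(z) = max(0, 1 - z). Consequently (1/n)Σᵢ ℓ_slant(yᵢ⟨w̃, xᵢ⟩) ≤ (1/n)Σᵢ ℓ_hinge(yᵢ⟨w, xᵢ⟩). -/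
/-! Pointwise, write `a = yᵢ⟨w,xᵢ⟩` and `b = yᵢ⟨w̃,xᵢ⟩`. If `a ≤ 0` the slant loss is at most
`1 ≤ 1 - a`. If `a > 0` the hypothesis gives `1/2 - b ≤ 1 - min 1 a`, and clipping the margin
at `1` does not change the hinge loss. -/

namespace Sparsification

noncomputable def slantLoss (z : ℝ) : ℝ := min 1 (max 0 (1 / 2 - z))

def hingeLoss (z : ℝ) : ℝ := max 0 (1 - z)

lemma hingeLoss_min_one (a : ℝ) : hingeLoss (min 1 a) = hingeLoss a := by
  unfold hingeLoss
  rcases le_total a 1 with ha | ha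
  · rw [min_eq_right ha]
  · rw [min_eq_left ha, sub_self, max_self, max_eq_left (by linarith)]

lemma slantLoss_le_hingeLoss {a b : ℝ} (h : 0 < min 1 a → min 1 a - b ≤ 1 / 2) :
    slantLoss b ≤ hingeLoss a := by
  by_cases ha : 0 < min 1 a
  · calc slantLoss b ≤ max 0 (1 / 2 - b) := min_le_right _ _
      _ ≤ hingeLoss (min 1 a) := max_le_max le_rfl (by linarith [h ha])
      _ = hingeLoss a := hingeLoss_min_one a
  · have ha' : a ≤ 0 := (min_le_iff.mp (not_lt.mp ha)).resolve_left (by norm_num)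
    calc slantLoss b ≤ 1 := min_le_left _ _
      _ ≤ 1 - a := by linarith
      _ ≤ hingeLoss a := le_max_right _ _

end Sparsification

open Sparsification in
theorem stmt4_general {H : Type*} [NormedAddCommGroup H] [InnerProductSpace ℝ H]
    (n : ℕ) (x : Fin n → H) (y : Fin n → ℝ)
    (w wt : H)
    (happrox : ∀ i, 0 < min 1 (y i * (inner ℝ w (x i) : ℝ)) →
      min 1 (y i * (inner ℝ w (x i) : ℝ)) - y i * (inner ℝ wt (x i) : ℝ) ≤ 1 / 2) :
    (∀ i, min 1 (max 0 (1 / 2 - y i * (inner ℝ wt (x i) : ℝ)))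
        ≤ max 0 (1 - y i * (inner ℝ w (x i) : ℝ))) ∧
    (1 / (n : ℝ)) * ∑ i, min 1 (max 0 (1 / 2 - y i * (inner ℝ wt (x i) : ℝ)))
        ≤ (1 / (n : ℝ)) * ∑ i, max 0 (1 - y i * (inner ℝ w (x i) : ℝ)) := by
  have pointwise : ∀ i, slantLoss (y i * inner ℝ wt (x i)) ≤ hingeLoss (y i * inner ℝ w (x i)) :=
    fun i => slantLoss_le_hingeLoss (happrox i)
  exact ⟨pointwise,
    mul_le_mul_of_nonneg_left (Finset.sum_le_sum fun i _ => pointwise i) (by positivity)⟩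

/-- If `w̃` solves the sparsification problem to value at most `1/2`
(that is, `hᵢ - yᵢ⟨w̃,xᵢ⟩ ≤ 1/2` whenever `hᵢ = min(1, yᵢ⟨w,xᵢ⟩) > 0`), then the
slant loss of `w̃` is bounded pointwise by the hinge loss of `w`, and hence so are
the empirical averages. -/
theorem stmt4 {H : Type*} [NormedAddCommGroup H] [InnerProductSpace ℝ H]
    (n : ℕ) (hn : 0 < n) (x : Fin n → H) (y : Fin n → ℝ)
    (hy : ∀ i, y i = 1 ∨ y i = -1) (w wt : H)
    (happrox : ∀ i, 0 < min 1 (y i * (inner ℝ w (x i) : ℝ)) →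
      min 1 (y i * (inner ℝ w (x i) : ℝ)) - y i * (inner ℝ wt (x i) : ℝ) ≤ 1 / 2) :
    (∀ i, min 1 (max 0 (1 / 2 - y i * (inner ℝ wt (x i) : ℝ)))
        ≤ max 0 (1 - y i * (inner ℝ w (x i) : ℝ))) ∧
    (1 / (n : ℝ)) * ∑ i, min 1 (max 0 (1 / 2 - y i * (inner ℝ wt (x i) : ℝ)))
        ≤ (1 / (n : ℝ)) * ∑ i, max 0 (1 - y i * (inner ℝ w (x i) : ℝ)) :=
  stmt4_general n x y w wt happrox
end

section
/- Let R > 0 with d = R² a positive integer, and let L*, ε ≥ 0 with L* + ε ≤ 1/4. There exists a distribution D over ℝᵈ × {±1} and a vector u ∈ ℝᵈ with ‖u‖ = R and expected hinge loss L* such that any linear classifier w ∈ ℝᵈ supported on fewer than d/2 coordinates (i.e. w is a linear combination of fewer than R²/2 of the standard basis vectors occurring in the data) has expected zero-one loss strictly greater than L* + ε. Concretely: D samples i uniformly from {1,…,d}, sets x = eᵢ, and y = z with probability 1 - L*/2 and y = -z otherwise for a fixed sign z; u = z·(1,…,1). Then any w with support of size k < d/2, together with any fixed rule for classifying points with ⟨w,x⟩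 = 0, errs with probability at least (d-k)/(2d) > 1/4 ≥ L* + ε for an adversarial choice of z. -/
/-!
Put mass `1/d` on each basis vector `eᵢ`, labelled `z` with probability `1 - L/2` and `-z`
otherwise; `u = z·(1,…,1)` has norm `√d` and hinge loss exactly `L`. A classifier `w` scores
every coordinate off its support as `0`, where the rule acts as one fixed coin, and `z` is
chosen as the label this coin gets wrong with probability at least `1/2`. Hence each of the
`d - k` coordinates off the support contributes error at least `1/(2d)`, and
`(d - k)/(2d) > 1/4` once `2k < d`.
-/

open Finset

/-- `ψ t` is the probability that the randomized rule labels a point with score `t` positive. -/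
def ruleError (ψ : ℝ → ℝ) (t : ℝ) (b : Bool) : ℝ := if b then 1 - ψ t else ψ t

def signVal (b : Bool) : ℝ := if b then 1 else -1

noncomputable def labelWeight (L : ℝ) (z b : Bool) : ℝ := if b = z then 1 - L / 2 else L / 2

lemma exists_half_le_ruleError (ψ : ℝ → ℝ) (t : ℝ) : ∃ z, 1 / 2 ≤ ruleError ψ t z := by
  rcases le_or_gt (ψ t) (1 / 2) with h | h
  · exact ⟨true, by simp only [ruleError, if_true]; linarith⟩
  · exact ⟨false, by simpa [ruleError] using h.le⟩

lemma ruleError_nonneg {ψ : ℝ → ℝ} (hψ : ∀ t, ψ t ∈ Set.Icc (0 : ℝ) 1) (t : ℝ) (b : Bool) :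
    0 ≤ ruleError ψ t b := by
  obtain ⟨h0, h1⟩ := hψ t
  cases b <;> simp only [ruleError] <;> norm_num <;> linarith

lemma labelWeight_nonneg {L : ℝ} (hL : 0 ≤ L) (hL2 : L ≤ 2) (z b : Bool) :
    0 ≤ labelWeight L z b := by
  unfold labelWeight; split_ifs <;> linarith

lemma sum_labelWeight (L : ℝ) (z : Bool) : ∑ b, labelWeight L z b = 1 := by
  cases z <;> simp [labelWeight]

lemma sum_labelWeight_mul_hinge (L : ℝ) (z : Bool) :
    ∑ b, labelWeight L z b * max 0 (1 - signVal b * signVal z) = L := by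
  cases z <;> norm_num [labelWeight, signVal, Fintype.sum_bool]

lemma sum_labelWeight_mul_ruleError_nonneg {ψ : ℝ → ℝ} (hψ : ∀ t, ψ t ∈ Set.Icc (0 : ℝ) 1)
    {L : ℝ} (hL : 0 ≤ L) (hL2 : L ≤ 2) (z : Bool) (t : ℝ) :
    0 ≤ ∑ b, labelWeight L z b * ruleError ψ t b :=
  sum_nonneg fun b _ => mul_nonneg (labelWeight_nonneg hL hL2 z b) (ruleError_nonneg hψ t b)

/-- With `p = 1 - L/2` and `e` the error on label `z`, the error is
`p e + (1 - p)(1 - e) = 1/2 + 2 (p - 1/2)(e - 1/2)`. -/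
lemma half_le_sum_labelWeight_mul_ruleError {ψ : ℝ → ℝ} {L : ℝ} (hL : L ≤ 1) {z : Bool} {t : ℝ}
    (hz : 1 / 2 ≤ ruleError ψ t z) :
    1 / 2 ≤ ∑ b, labelWeight L z b * ruleError ψ t b := by
  cases z <;> simp only [ruleError, labelWeight, Fintype.sum_bool] at hz ⊢ <;>
    norm_num at hz ⊢ <;> nlinarith

lemma sum_labelWeight_div_mul {d : ℕ} (L : ℝ) (z : Bool) (F : Fin d × Bool → ℝ) :
    ∑ a : Fin d × Bool, labelWeight L z a.2 / d * F a =
      (∑ i, ∑ b, labelWeight L z b * F (i, b)) / d := by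
  simp only [Fintype.sum_prod_type, sum_div, div_mul_eq_mul_div]

lemma card_filter_not_mul_le_sum {ι : Type*} [Fintype ι] (p : ι → Prop) [DecidablePred p]
    {f : ι → ℝ} {c : ℝ} (hf : ∀ i, 0 ≤ f i) (hc : ∀ i, ¬ p i → c ≤ f i) :
    #(univ.filter fun i => ¬ p i) * c ≤ ∑ i, f i :=
  calc #(univ.filter fun i => ¬ p i) * c = #(univ.filter fun i => ¬ p i) • c :=
        (nsmul_eq_mul _ _).symm
    _ ≤ ∑ i ∈ univ.filter fun i => ¬ p i, f i :=
        card_nsmul_le_sum _ _ _ fun i hi => hc i (by simpa using hi)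
    _ ≤ ∑ i, f i := sum_le_univ_sum_of_nonneg hf

lemma norm_toLp_signVal (d : ℕ) (z : Bool) :
    ‖(WithLp.toLp 2 (fun _ => signVal z) : EuclideanSpace ℝ (Fin d))‖ = Real.sqrt d := by
  rw [show (fun _ : Fin d => signVal z) = Function.const _ (signVal z) from rfl,
    PiLp.norm_toLp_const (by simp)]
  cases z <;> simp [signVal, Real.sqrt_eq_rpow]

lemma card_sub_card_support_div_le_error {d : ℕ} {ψ : ℝ → ℝ}
    (hψ : ∀ t, ψ t ∈ Set.Icc (0 : ℝ) 1) {L : ℝ} (hL : 0 ≤ L) (hL1 : L ≤ 1) {z : Bool}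
    (hz : 1 / 2 ≤ ruleError ψ 0 z) (w : Fin d → ℝ) :
    ((d : ℝ) - #(univ.filter fun i => w i ≠ 0)) / (2 * d) ≤
      ∑ a : Fin d × Bool, labelWeight L z a.2 / d * ruleError ψ (w a.1) a.2 := by
  have hzeros :
      (d : ℝ) - #(univ.filter fun i => w i ≠ 0) = #(univ.filter fun i => ¬ w i ≠ 0) := by
    have hcard := card_filter_add_card_filter_not (s := (univ : Finset (Fin d))) fun i => w i ≠ 0
    rw [card_univ, Fintype.card_fin] at hcard
    rw [sub_eq_iff_eq_add']
    exact_mod_cast hcard.symm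
  have hsum := card_filter_not_mul_le_sum (fun i => w i ≠ 0) (c := 1 / 2)
    (fun i => sum_labelWeight_mul_ruleError_nonneg hψ hL (by linarith) z (w i))
    (fun i hi => by rw [not_not.mp hi]; exact half_le_sum_labelWeight_mul_ruleError hL1 hz)
  rw [mul_one_div] at hsum
  rw [sum_labelWeight_div_mul, hzeros, ← div_div]
  exact div_le_div_of_nonneg_right hsum (Nat.cast_nonneg d)

/-- Sparsity lower bound: for any (possibly randomized, via `ψ`) classification rule,
there is a distribution on `{e₁,…,e_d} × {±1}` and a reference vector `u` with
`‖u‖ = √d = R` and expected hinge loss `L*`, such that every linear classifier `w`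
supported on fewer than `d/2 = R²/2` coordinates has expected zero-one error at least
`(d-k)/(2d)`, which is strictly greater than `L* + ε`. -/
theorem stmt5 (d : ℕ) (hd : 0 < d) (L ε : ℝ) (hL : 0 ≤ L) (hε : 0 ≤ ε)
    (hLe : L + ε ≤ 1 / 4) (ψ : ℝ → ℝ) (hψ : ∀ t, ψ t ∈ Set.Icc (0 : ℝ) 1) :
    ∃ (q : Fin d × Bool → ℝ) (u : EuclideanSpace ℝ (Fin d)),
      (∀ a, 0 ≤ q a) ∧ (∑ a : Fin d × Bool, q a = 1) ∧
      ‖u‖ = Real.sqrt d ∧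
      (∑ a : Fin d × Bool, q a * max 0 (1 - (if a.2 then (1 : ℝ) else -1) * u a.1) = L) ∧
      (∀ w : Fin d → ℝ,
        2 * (Finset.univ.filter fun i => w i ≠ 0).card < d →
        ((d : ℝ) - (Finset.univ.filter fun i => w i ≠ 0).card) / (2 * d) ≤
          (∑ a : Fin d × Bool, q a * (if a.2 then 1 - ψ (w a.1) else ψ (w a.1))) ∧
        L + ε <
          ∑ a : Fin d × Bool, q a * (if a.2 then 1 - ψ (w a.1) else ψ (w a.1))) := by
  have hdR : (0 : ℝ) < d := by exact_mod_cast hd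
  obtain ⟨z, hz⟩ := exists_half_le_ruleError ψ 0
  refine ⟨fun a => labelWeight L z a.2 / d, WithLp.toLp 2 fun _ => signVal z,
    fun a => div_nonneg (labelWeight_nonneg hL (by linarith) z a.2) hdR.le, ?_,
    norm_toLp_signVal d z, ?_, fun w hw => ?_⟩
  · have hmass := sum_labelWeight_div_mul (d := d) L z fun _ => 1
    simp only [mul_one, sum_labelWeight, sum_const, card_univ, Fintype.card_fin, nsmul_eq_mul]
      at hmass
    rw [hmass, div_self hdR.ne']
  · rw [sum_labelWeight_div_mul]
    show (∑ i : Fin d, ∑ b, labelWeight L z b * max 0 (1 - signVal b * signVal z)) / d = L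
    simp only [sum_labelWeight_mul_hinge, sum_const, card_univ, Fintype.card_fin, nsmul_eq_mul]
    field_simp
  · have herr := card_sub_card_support_div_le_error hψ hL (by linarith) hz w
    have hk : (2 : ℝ) * #(univ.filter fun i => w i ≠ 0) < d := by exact_mod_cast hw
    refine ⟨herr, lt_of_lt_of_le ?_ herr⟩
    calc L + ε ≤ 1 / 4 := hLe
      _ < _ := by rw [lt_div_iff₀ (by positivity)]; linarith
end

section
/- The function f(c) = max_{ξ⪰0, Σξᵢ≤nν} min_{p∈Δⁿ} Σᵢ pᵢ(cᵢ + ξᵢ) equals the 'water-filling level': f(c) = max{ γ ∈ ℝ : Σᵢ max(0, γ - cᵢ) ≤ nν }. In particular f is concave and nondecreasing in each coordinate of c. -/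
/-- The probability simplex in ℝⁿ. -/
def probSimplex (n : ℕ) : Set (Fin n → ℝ) :=
  {p | (∀ i, 0 ≤ p i) ∧ ∑ i, p i = 1}

/-- The slack constraint set `{ξ : ξ ⪰ 0, Σξᵢ ≤ nν}`. -/
def slackSet (n : ℕ) (ν : ℝ) : Set (Fin n → ℝ) :=
  {ξ | (∀ i, 0 ≤ ξ i) ∧ ∑ i, ξ i ≤ n * ν}

/-- `f(c) = max_{ξ ∈ slackSet} min_{p ∈ Δⁿ} Σᵢ pᵢ (cᵢ + ξᵢ)`. -/
noncomputable def slackObj (n : ℕ) (ν : ℝ) (c : Fin n → ℝ) : ℝ :=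
  sSup ((fun ξ => sInf ((fun p => ∑ i, p i * (c i + ξ i)) '' probSimplex n)) ''
    slackSet n ν)

/-!
For a fixed slack `ξ` the inner minimum over the simplex is attained at a vertex, so it equals
`minᵢ (cᵢ + ξᵢ)`. Such a minimum `m` is an admissible water level, because
`ξᵢ ≥ max 0 (m - cᵢ)`; conversely the level `γ` is reached by pouring `ξᵢ = max 0 (γ - cᵢ)`.
Hence both suprema agree. The admissible levels form a closed set, so the water level is itself
admissible, and convexity of `t ↦ max 0 t` makes a convex combination of admissible levels
admissible for the combined `c`.
-/

open Finset

section Simplex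

variable {ι : Type*} [Fintype ι] [Nonempty ι]

theorem inf'_le_sum_mul_of_mem_stdSimplex {p : ι → ℝ} (hp : p ∈ stdSimplex ℝ ι)
    (a : ι → ℝ) :
    univ.inf' univ_nonempty a ≤ ∑ i, p i * a i :=
  calc univ.inf' univ_nonempty a = ∑ i, p i * univ.inf' univ_nonempty a := by
        rw [← sum_mul, hp.2, one_mul]
    _ ≤ ∑ i, p i * a i :=
        sum_le_sum fun i _ => mul_le_mul_of_nonneg_left (inf'_le a (mem_univ i)) (hp.1 i)

theorem isLeast_image_stdSimplex (a : ι → ℝ) :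
    IsLeast ((fun p => ∑ i, p i * a i) '' stdSimplex ℝ ι) (univ.inf' univ_nonempty a) := by
  classical
  obtain ⟨j, -, hj⟩ := exists_mem_eq_inf' univ_nonempty a
  refine ⟨⟨Pi.single j 1, single_mem_stdSimplex ℝ j, ?_⟩, ?_⟩
  · simp [Pi.single_apply, ite_mul, hj]
  rintro _ ⟨p, hp, rfl⟩
  exact inf'_le_sum_mul_of_mem_stdSimplex hp a

theorem sInf_image_stdSimplex (a : ι → ℝ) :
    sInf ((fun p => ∑ i, p i * a i) '' stdSimplex ℝ ι) = univ.inf' univ_nonempty a :=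
  (isLeast_image_stdSimplex a).csInf_eq

end Simplex

def waterFillingSet {ι : Type*} [Fintype ι] (b : ℝ) (c : ι → ℝ) : Set ℝ :=
  {γ | ∑ i, max 0 (γ - c i) ≤ b}

noncomputable def waterLevel {ι : Type*} [Fintype ι] (b : ℝ) (c : ι → ℝ) : ℝ :=
  sSup (waterFillingSet b c)

section WaterFilling

variable {ι : Type*} [Fintype ι] {b : ℝ}

theorem bddAbove_waterFillingSet [Nonempty ι] (b : ℝ) (c : ι → ℝ) :
    BddAbove (waterFillingSet b c) := by
  obtain ⟨j⟩ := ‹Nonempty ι›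
  refine ⟨c j + b, fun γ hγ => ?_⟩
  have : max 0 (γ - c j) ≤ b :=
    (single_le_sum (f := fun i => max 0 (γ - c i)) (fun i _ => le_max_left _ _)
      (mem_univ j)).trans hγ
  linarith [le_max_right 0 (γ - c j)]

theorem inf'_mem_waterFillingSet [Nonempty ι] (hb : 0 ≤ b) (c : ι → ℝ) :
    univ.inf' univ_nonempty c ∈ waterFillingSet b c := by
  have hzero : ∀ i, max 0 (univ.inf' univ_nonempty c - c i) = 0 := fun i =>
    max_eq_left (sub_nonpos.2 (inf'_le c (mem_univ i)))
  simpa [waterFillingSet, hzero] using hb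

theorem isClosed_waterFillingSet (b : ℝ) (c : ι → ℝ) : IsClosed (waterFillingSet b c) :=
  isClosed_le (by fun_prop) continuous_const

theorem waterLevel_mem_waterFillingSet [Nonempty ι] (hb : 0 ≤ b) (c : ι → ℝ) :
    waterLevel b c ∈ waterFillingSet b c :=
  (isClosed_waterFillingSet b c).csSup_mem ⟨_, inf'_mem_waterFillingSet hb c⟩
    (bddAbove_waterFillingSet b c)

theorem waterFillingSet_mono {c c' : ι → ℝ} (h : c ≤ c') :
    waterFillingSet b c ⊆ waterFillingSet b c' := fun γ hγ =>
  (sum_le_sum fun i _ => max_le_max le_rfl (sub_le_sub_left (h i) γ)).trans hγ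

theorem convexCombination_mem_waterFillingSet {c c' : ι → ℝ} {γ γ' s t : ℝ}
    (hγ : γ ∈ waterFillingSet b c) (hγ' : γ' ∈ waterFillingSet b c')
    (hs : 0 ≤ s) (ht : 0 ≤ t) (hst : s + t = 1) :
    s * γ + t * γ' ∈ waterFillingSet b (s • c + t • c') := by
  have hconv : ∀ i, max 0 (s * γ + t * γ' - (s • c + t • c') i) ≤
      s * max 0 (γ - c i) + t * max 0 (γ' - c' i) := fun i => by
    have h1 := mul_le_mul_of_nonneg_left (le_max_right 0 (γ - c i)) hs
    have h2 := mul_le_mul_of_nonneg_left (le_max_right 0 (γ' - c' i)) ht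
    simp only [Pi.add_apply, Pi.smul_apply, smul_eq_mul]
    exact max_le (by positivity) (by linarith)
  calc ∑ i, max 0 (s * γ + t * γ' - (s • c + t • c') i)
      ≤ s * ∑ i, max 0 (γ - c i) + t * ∑ i, max 0 (γ' - c' i) := by
        rw [mul_sum, mul_sum, ← sum_add_distrib]
        exact sum_le_sum fun i _ => hconv i
    _ ≤ s * b + t * b := by gcongr; exacts [hγ, hγ']
    _ = b := by rw [← add_mul, hst, one_mul]

theorem concaveOn_waterLevel [Nonempty ι] (hb : 0 ≤ b) :
    ConcaveOn ℝ Set.univ (waterLevel (ι := ι) b) :=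
  ⟨convex_univ, fun c _ c' _ _ _ hs ht hst =>
    le_csSup (bddAbove_waterFillingSet b _)
      (convexCombination_mem_waterFillingSet (waterLevel_mem_waterFillingSet hb c)
        (waterLevel_mem_waterFillingSet hb c') hs ht hst)⟩

theorem monotone_waterLevel [Nonempty ι] (hb : 0 ≤ b) : Monotone (waterLevel (ι := ι) b) :=
  fun _ c' h => csSup_le_csSup (bddAbove_waterFillingSet b c')
    ⟨_, inf'_mem_waterFillingSet hb _⟩ (waterFillingSet_mono h)

theorem sSup_sInf_stdSimplex_eq_waterLevel [Nonempty ι] (b : ℝ) (c : ι → ℝ) :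
    sSup ((fun ξ : ι → ℝ => sInf ((fun p => ∑ i, p i * (c i + ξ i)) '' stdSimplex ℝ ι))
      '' {ξ : ι → ℝ | (∀ i, 0 ≤ ξ i) ∧ ∑ i, ξ i ≤ b}) = waterLevel b c := by
  simp only [sInf_image_stdSimplex]
  apply csSup_eq_csSup_of_forall_exists_le
  · rintro _ ⟨ξ, ⟨hξ, hξb⟩, rfl⟩
    refine ⟨_, (sum_le_sum fun i _ => max_le (hξ i) ?_).trans hξb, le_rfl⟩
    linarith [inf'_le (fun i => c i + ξ i) (mem_univ i)]
  · intro γ hγ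
    refine ⟨_, ⟨fun i => max 0 (γ - c i), ⟨fun i => le_max_left _ _, hγ⟩, rfl⟩, ?_⟩
    exact le_inf' _ _ fun i _ => by linarith [le_max_right 0 (γ - c i)]

end WaterFilling

/-- `f` equals the water-filling level `max {γ : Σᵢ max(0, γ - cᵢ) ≤ nν}`; in
particular `f` is concave and nondecreasing in each coordinate of `c`. -/
theorem stmt8 (n : ℕ) (hn : 0 < n) (ν : ℝ) (hν : 0 ≤ ν) :
    (∀ c : Fin n → ℝ,
      slackObj n ν c = sSup {γ : ℝ | ∑ i, max 0 (γ - c i) ≤ n * ν}) ∧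
    ConcaveOn ℝ Set.univ (slackObj n ν) ∧
    (∀ c c' : Fin n → ℝ, c ≤ c' → slackObj n ν c ≤ slackObj n ν c') := by
  have : Nonempty (Fin n) := Fin.pos_iff_nonempty.mp hn
  have hbudget : 0 ≤ (n : ℝ) * ν := by positivity
  have hslack : slackObj n ν = waterLevel (n * ν) :=
    funext (sSup_sInf_stdSimplex_eq_waterLevel (n * ν))
  rw [hslack]
  exact ⟨fun _ => rfl, concaveOn_waterLevel hbudget, fun _ _ h => monotone_waterLevel hbudget h⟩
end

section
/- Let W' be a symmetric d×d real matrix with eigenvalues σ'₁,…,σ'_d and orthonormal eigenvectors v'₁,…,v'_d, and let 0 < k < d. The unique minimizer W of the quantum relative entropy D(W‖W') = tr(W(log W - log W')) over the set {W ⪰ 0, ‖W‖₂ ≤ 1/(d-k), tr W = 1} has the same eigenvectors as W', with eigenvalues σᵢ = min(1/(d-k), σ'ᵢ/Z) for the unique constant Z > 0 such that Σᵢ σᵢ = 1. -/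
open Matrix

/-- Matrix logarithm of a Hermitian matrix, via the spectral decomposition
(junk value `0` on non-Hermitian matrices). -/
noncomputable def matLog {d : ℕ} (A : Matrix (Fin d) (Fin d) ℝ) :
    Matrix (Fin d) (Fin d) ℝ :=
  if hA : A.IsHermitian then
    (hA.eigenvectorUnitary : Matrix (Fin d) (Fin d) ℝ) *
      Matrix.diagonal (fun i => Real.log (hA.eigenvalues i)) *
      star (hA.eigenvectorUnitary : Matrix (Fin d) (Fin d) ℝ)
  else 0

/-- Quantum relative entropy `D(W‖W') = tr (W (log W - log W'))`. -/
noncomputable def quantumRelEnt {d : ℕ} (W W' : Matrix (Fin d) (Fin d) ℝ) : ℝ :=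
  (W * (matLog W - matLog W')).trace

/-- The Warmuth–Kuzmin feasible set: `W ⪰ 0`, spectral norm at most `1/(d-k)`
(expressed as `(1/(d-k))·I - W ⪰ 0`), and `tr W = 1`. -/
def feasWK (d k : ℕ) : Set (Matrix (Fin d) (Fin d) ℝ) :=
  {W | W.PosSemidef ∧
    ((1 / ((d : ℝ) - (k : ℝ))) • (1 : Matrix (Fin d) (Fin d) ℝ) - W).PosSemidef ∧
    W.trace = 1}

/-!
Write a feasible `M = U diag(μ) Uᵀ` and `W' = V diag(σ') Vᵀ`. The matrix `Q = (UᵀV) ⊙ (UᵀV)` is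
doubly stochastic and `D(M‖W') = Σᵢ μᵢ log μᵢ - Σⱼ mⱼ log σ'ⱼ` with `m = μ Q`. Klein's inequality
`x - y ≤ x log x - x log y`, averaged through `Q`, gives `Σⱼ mⱼ log σⱼ ≤ Σᵢ μᵢ log μᵢ`, strictly
unless `M = W = V diag(σ) Vᵀ`. The vector `m` is again feasible (`mⱼ ≤ c`, `Σ mⱼ = 1`), and
`log (σⱼ Z / σ'ⱼ)` vanishes where `σⱼ = σ'ⱼ / Z` and is negative where `σⱼ = c`, so
`Σⱼ (mⱼ - σⱼ) log (σⱼ / σ'ⱼ) ≥ 0`. Adding the two gives `D(W‖W') < D(M‖W')`.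
The constant `Z` exists by the intermediate value theorem, and is unique because the capped sum
is strictly decreasing at any `Z` where it equals `1 < d c`.
-/

open InformationTheory

theorem Real.mul_log_sub_mul_log_sub_sub_eq_mul_klFun {x y : ℝ} (hx : 0 ≤ x) (hy : 0 < y) :
    x * Real.log x - x * Real.log y - (x - y) = y * klFun (x / y) := by
  rcases hx.eq_or_lt with rfl | hx
  · simp [klFun]
  · rw [klFun_apply, Real.log_div hx.ne' hy.ne']
    field_simp
    ring

theorem Real.sub_le_mul_log_sub_mul_log {x y : ℝ} (hx : 0 ≤ x) (hy : 0 < y) :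
    x - y ≤ x * Real.log x - x * Real.log y := by
  have := Real.mul_log_sub_mul_log_sub_sub_eq_mul_klFun hx hy
  nlinarith [klFun_nonneg (div_nonneg hx hy.le)]

theorem Real.sub_lt_mul_log_sub_mul_log {x y : ℝ} (hx : 0 ≤ x) (hy : 0 < y) (hxy : x ≠ y) :
    x - y < x * Real.log x - x * Real.log y := by
  have hxy' : klFun (x / y) ≠ 0 := by
    rwa [Ne, klFun_eq_zero_iff (div_nonneg hx hy.le), div_eq_one_iff_eq hy.ne']
  have := Real.mul_log_sub_mul_log_sub_sub_eq_mul_klFun hx hy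
  nlinarith [mul_pos hy ((klFun_nonneg (div_nonneg hx hy.le)).lt_of_ne' hxy')]

namespace Matrix

variable {n : Type*} [Fintype n] [DecidableEq n] {Q : Matrix n n ℝ}

theorem isHermitian_mul_diagonal_mul_transpose (V : Matrix n n ℝ) (a : n → ℝ) :
    (V * diagonal a * Vᵀ).IsHermitian := by
  simp [IsHermitian, conjTranspose_eq_transpose_of_trivial, transpose_mul, Matrix.mul_assoc]

theorem posSemidef_mul_diagonal_mul_transpose_iff {V : Matrix n n ℝ} (hV : V * Vᵀ = 1)
    {a : n → ℝ} : (V * diagonal a * Vᵀ).PosSemidef ↔ ∀ i, 0 ≤ a i := by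
  rw [← conjTranspose_eq_transpose_of_trivial, ← star_eq_conjTranspose,
    (IsUnit.of_mul_eq_one Vᵀ hV).posSemidef_star_right_conjugate_iff, posSemidef_diagonal_iff]

theorem trace_mul_diagonal_mul_transpose {V : Matrix n n ℝ} (hV : V * Vᵀ = 1) (a : n → ℝ) :
    (V * diagonal a * Vᵀ).trace = ∑ i, a i := by
  rw [trace_mul_cycle, mul_eq_one_comm.mp hV, Matrix.one_mul, trace_diagonal]

theorem smul_one_eq_mul_diagonal_mul_transpose {V : Matrix n n ℝ} (hV : V * Vᵀ = 1) (c : ℝ) :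
    c • (1 : Matrix n n ℝ) = V * diagonal (fun _ => c) * Vᵀ := by
  rw [← smul_one_eq_diagonal, Matrix.mul_smul, Matrix.mul_one, Matrix.smul_mul, hV]

theorem trace_diagonal_mul_mul_diagonal_mul_transpose (P : Matrix n n ℝ) (a b : n → ℝ) :
    (diagonal a * P * diagonal b * Pᵀ).trace = (a ᵥ* (P ⊙ P)) ⬝ᵥ b := by
  simp only [trace, diag, mul_apply, transpose_apply, dotProduct, vecMul, hadamard_apply,
    Finset.sum_mul, diagonal_apply, ite_mul, mul_ite, zero_mul, mul_zero, Finset.sum_ite_eq,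
    Finset.sum_ite_eq', Finset.mem_univ, if_true]
  rw [Finset.sum_comm]
  exact Finset.sum_congr rfl fun i _ => Finset.sum_congr rfl fun j _ => by ring

theorem trace_mul_diagonal_mul_transpose_mul (U V : Matrix n n ℝ) (a b : n → ℝ) :
    ((U * diagonal a * Uᵀ) * (V * diagonal b * Vᵀ)).trace =
      (a ᵥ* ((Uᵀ * V) ⊙ (Uᵀ * V))) ⬝ᵥ b := by
  rw [← trace_diagonal_mul_mul_diagonal_mul_transpose, transpose_mul, transpose_transpose,
    show U * diagonal a * Uᵀ * (V * diagonal b * Vᵀ) =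
      U * (diagonal a * (Uᵀ * V) * diagonal b * Vᵀ) by simp only [Matrix.mul_assoc],
    trace_mul_comm]
  simp only [Matrix.mul_assoc]

theorem diagonal_mul_eq_mul_diagonal_iff {P : Matrix n n ℝ} {a b : n → ℝ} :
    diagonal a * P = P * diagonal b ↔ ∀ i j, P i j ≠ 0 → a i = b j := by
  simp only [← Matrix.ext_iff, diagonal_mul, mul_diagonal, mul_comm (a _)]
  refine forall₂_congr fun i j => ⟨fun h hP => mul_left_cancel₀ hP h, fun h => ?_⟩
  by_cases hP : P i j = 0
  · simp [hP]
  · rw [h hP]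

theorem mul_diagonal_mul_transpose_eq_iff {U V : Matrix n n ℝ} (hU : U * Uᵀ = 1)
    (hV : V * Vᵀ = 1) {a b : n → ℝ} :
    U * diagonal a * Uᵀ = V * diagonal b * Vᵀ ↔
      diagonal a * (Uᵀ * V) = (Uᵀ * V) * diagonal b := by
  have hU' : Uᵀ * U = 1 := mul_eq_one_comm.mp hU
  have hV' : Vᵀ * V = 1 := mul_eq_one_comm.mp hV
  constructor
  · intro h
    calc diagonal a * (Uᵀ * V) = Uᵀ * (U * diagonal a * Uᵀ) * V := by
          simp only [Matrix.mul_assoc, ← Matrix.mul_assoc Uᵀ U, hU', Matrix.one_mul]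
      _ = Uᵀ * V * diagonal b := by
          rw [h]; simp only [Matrix.mul_assoc, hV', Matrix.mul_one]
  · intro h
    calc U * diagonal a * Uᵀ = U * (diagonal a * (Uᵀ * V)) * Vᵀ := by
          simp only [Matrix.mul_assoc, hV, Matrix.mul_one]
      _ = V * diagonal b * Vᵀ := by
          rw [h]; simp only [← Matrix.mul_assoc, hU, Matrix.one_mul]

theorem mul_diagonal_mul_transpose_map_eq {U V : Matrix n n ℝ} (hU : U * Uᵀ = 1)
    (hV : V * Vᵀ = 1) {a b : n → ℝ} (h : U * diagonal a * Uᵀ = V * diagonal b * Vᵀ)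
    (f : ℝ → ℝ) :
    U * diagonal (fun i => f (a i)) * Uᵀ = V * diagonal (fun i => f (b i)) * Vᵀ := by
  rw [mul_diagonal_mul_transpose_eq_iff hU hV, diagonal_mul_eq_mul_diagonal_iff] at h ⊢
  exact fun i j hij => congrArg f (h i j hij)

theorem hadamard_self_mem_doublyStochastic {P : Matrix n n ℝ} (hP : P * Pᵀ = 1) :
    P ⊙ P ∈ doublyStochastic ℝ n := by
  have hP' : Pᵀ * P = 1 := mul_eq_one_comm.mp hP
  refine mem_doublyStochastic_iff_sum.mpr ⟨fun i j => mul_self_nonneg _, fun i => ?_, fun j => ?_⟩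
  · simpa [mul_apply] using congrFun (congrFun hP i) i
  · simpa [mul_apply] using congrFun (congrFun hP' j) j

theorem IsHermitian.eigenvectorUnitary_mul_transpose {A : Matrix n n ℝ} (hA : A.IsHermitian) :
    (hA.eigenvectorUnitary : Matrix n n ℝ) * (hA.eigenvectorUnitary : Matrix n n ℝ)ᵀ = 1 := by
  simpa [star_eq_conjTranspose, conjTranspose_eq_transpose_of_trivial] using
    mem_unitaryGroup_iff.mp hA.eigenvectorUnitary.2

theorem IsHermitian.eq_eigenvectorUnitary_mul_diagonal_mul_transpose {A : Matrix n n ℝ}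
    (hA : A.IsHermitian) :
    A = (hA.eigenvectorUnitary : Matrix n n ℝ) * diagonal hA.eigenvalues *
      (hA.eigenvectorUnitary : Matrix n n ℝ)ᵀ := by
  simpa [Unitary.conjStarAlgAut_apply, star_eq_conjTranspose,
    conjTranspose_eq_transpose_of_trivial] using hA.spectral_theorem

theorem sum_vecMul_of_mem_doublyStochastic (hQ : Q ∈ doublyStochastic ℝ n) (μ : n → ℝ) :
    ∑ j, (μ ᵥ* Q) j = ∑ i, μ i := by
  rw [← dotProduct_one, ← dotProduct_mulVec, mulVec_one_of_mem_doublyStochastic hQ,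
    dotProduct_one]

theorem vecMul_le_of_mem_doublyStochastic (hQ : Q ∈ doublyStochastic ℝ n) {μ : n → ℝ} {c : ℝ}
    (hμ : ∀ i, μ i ≤ c) (j : n) : (μ ᵥ* Q) j ≤ c :=
  calc (μ ᵥ* Q) j ≤ ∑ i, c * Q i j :=
        Finset.sum_le_sum fun i _ => mul_le_mul_of_nonneg_right (hμ i) (hQ.1 i j)
    _ = c := by rw [← Finset.mul_sum, sum_col_of_mem_doublyStochastic hQ, mul_one]

theorem vecMul_dotProduct_log_lt_of_mem_doublyStochastic (hQ : Q ∈ doublyStochastic ℝ n)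
    {μ σ : n → ℝ} (hμ : ∀ i, 0 ≤ μ i) (hσ : ∀ j, 0 < σ j) (hsum : ∑ i, μ i = ∑ j, σ j)
    (hne : ∃ i j, Q i j ≠ 0 ∧ μ i ≠ σ j) :
    (μ ᵥ* Q) ⬝ᵥ (fun j => Real.log (σ j)) < μ ⬝ᵥ (fun i => Real.log (μ i)) := by
  have hrow := sum_row_of_mem_doublyStochastic hQ
  have hcol := sum_col_of_mem_doublyStochastic hQ
  have hgap : μ ⬝ᵥ (fun i => Real.log (μ i)) - (μ ᵥ* Q) ⬝ᵥ (fun j => Real.log (σ j)) =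
      ∑ p : n × n, Q p.1 p.2 * (μ p.1 * Real.log (μ p.1) - μ p.1 * Real.log (σ p.2)) := by
    simp only [dotProduct, vecMul, Fintype.sum_prod_type, mul_sub, Finset.sum_sub_distrib,
      Finset.sum_mul]
    rw [Finset.sum_comm (f := fun j i => μ i * Q i j * Real.log (σ j))]
    congr 1
    · refine Finset.sum_congr rfl fun i _ => ?_
      rw [← Finset.sum_mul, hrow, one_mul]
    · exact Finset.sum_congr rfl fun i _ => Finset.sum_congr rfl fun j _ => by ring
  have hzero : ∑ p : n × n, Q p.1 p.2 * (μ p.1 - σ p.2) = 0 := by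
    simp only [Fintype.sum_prod_type, mul_sub, Finset.sum_sub_distrib]
    rw [Finset.sum_comm (f := fun i j => Q i j * σ j)]
    simp only [← Finset.sum_mul, hrow, hcol, one_mul, hsum, sub_self]
  obtain ⟨i, j, hQij, hμσ⟩ := hne
  have hlt : ∑ p : n × n, Q p.1 p.2 * (μ p.1 - σ p.2) <
      ∑ p : n × n, Q p.1 p.2 * (μ p.1 * Real.log (μ p.1) - μ p.1 * Real.log (σ p.2)) :=
    Finset.sum_lt_sum
      (fun p _ => mul_le_mul_of_nonneg_left
        (Real.sub_le_mul_log_sub_mul_log (hμ p.1) (hσ p.2)) (hQ.1 p.1 p.2))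
      ⟨(i, j), Finset.mem_univ _, mul_lt_mul_of_pos_left
        (Real.sub_lt_mul_log_sub_mul_log (hμ i) (hσ j) hμσ) ((hQ.1 i j).lt_of_ne' hQij)⟩
  linarith

end Matrix

section CappedRescale

variable {ι : Type*}

noncomputable def cappedRescale (c Z : ℝ) (σ' : ι → ℝ) : ι → ℝ := fun i => min c (σ' i / Z)

variable {c Z : ℝ} {σ' : ι → ℝ}

theorem cappedRescale_pos (hc : 0 < c) (hZ : 0 < Z) (hσ' : ∀ i, 0 < σ' i) (i : ι) :
    0 < cappedRescale c Z σ' i :=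
  lt_min hc (div_pos (hσ' i) hZ)

theorem sub_mul_log_cappedRescale_add_log_nonneg (hc : 0 < c) (hZ : 0 < Z)
    (hσ' : ∀ i, 0 < σ' i) {m : ℝ} (hm : m ≤ c) (i : ι) :
    0 ≤ (m - cappedRescale c Z σ' i) *
      (Real.log (cappedRescale c Z σ' i) - Real.log (σ' i) + Real.log Z) := by
  rcases le_or_gt (σ' i / Z) c with hle | hlt
  · rw [cappedRescale, min_eq_right hle, Real.log_div (hσ' i).ne' hZ.ne']
    simp
  · rw [cappedRescale, min_eq_left hlt.le]
    have := Real.log_lt_log hc hlt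
    rw [Real.log_div (hσ' i).ne' hZ.ne'] at this
    exact mul_nonneg_of_nonpos_of_nonpos (by linarith) (by linarith)

variable [Fintype ι]

theorem cappedRescale_dotProduct_log_sub_le (hc : 0 < c) (hZ : 0 < Z) (hσ' : ∀ i, 0 < σ' i)
    {m : ι → ℝ} (hm : ∀ i, m i ≤ c) (hsum : ∑ i, m i = ∑ i, cappedRescale c Z σ' i) :
    cappedRescale c Z σ' ⬝ᵥ (fun i => Real.log (cappedRescale c Z σ' i)) -
        cappedRescale c Z σ' ⬝ᵥ (fun i => Real.log (σ' i)) ≤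
      m ⬝ᵥ (fun i => Real.log (cappedRescale c Z σ' i)) - m ⬝ᵥ (fun i => Real.log (σ' i)) := by
  set σ := cappedRescale c Z σ'
  have hsplit : ∑ i, (m i - σ i) * (Real.log (σ i) - Real.log (σ' i) + Real.log Z) =
      (m ⬝ᵥ (fun i => Real.log (σ i)) - m ⬝ᵥ (fun i => Real.log (σ' i))) -
        (σ ⬝ᵥ (fun i => Real.log (σ i)) - σ ⬝ᵥ (fun i => Real.log (σ' i))) := by
    simp only [dotProduct, mul_add, mul_sub, Finset.sum_add_distrib, Finset.sum_sub_distrib,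
      ← Finset.sum_mul, hsum, sub_self, add_zero, sub_mul]
    ring
  linarith [Finset.sum_nonneg fun i (_ : i ∈ Finset.univ) =>
    sub_mul_log_cappedRescale_add_log_nonneg hc hZ hσ' (hm i) i]

theorem sum_cappedRescale_eq_card_mul (h : ∀ i, c ≤ σ' i / Z) :
    ∑ i, cappedRescale c Z σ' i = Fintype.card ι * c := by
  simp [cappedRescale, min_eq_left (h _)]

theorem sum_cappedRescale_lt_of_lt {Z₁ Z₂ : ℝ} (hZ₁ : 0 < Z₁) (hZ : Z₁ < Z₂)
    (hσ' : ∀ i, 0 < σ' i) (hcap : ∃ i, σ' i / Z₂ < c) :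
    ∑ i, cappedRescale c Z₂ σ' i < ∑ i, cappedRescale c Z₁ σ' i := by
  obtain ⟨i, hi⟩ := hcap
  refine Finset.sum_lt_sum (fun j _ => min_le_min le_rfl
    (div_le_div_of_nonneg_left (hσ' j).le hZ₁ hZ.le)) ⟨i, Finset.mem_univ _, ?_⟩
  rw [cappedRescale, min_eq_right hi.le]
  exact lt_min hi (div_lt_div_of_pos_left (hσ' i) hZ₁ hZ)

theorem existsUnique_sum_cappedRescale_eq_one (hc : 0 < c) (hcard : 1 < Fintype.card ι * c)
    (hσ' : ∀ i, 0 < σ' i) :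
    ∃! Z, 0 < Z ∧ ∑ i, cappedRescale c Z σ' i = 1 := by
  have hι : (Finset.univ : Finset ι).Nonempty :=
    Finset.univ_nonempty_iff.2 <| Fintype.card_pos_iff.1 <| Nat.pos_of_ne_zero fun h => by
      rw [h, Nat.cast_zero, zero_mul] at hcard
      linarith
  -- Below `Zs` every weight is capped at `c`; above `Zb` their sum is less than one.
  set Zs := Finset.univ.inf' hι fun i => σ' i / c
  have hZs : 0 < Zs := (Finset.lt_inf'_iff _).2 fun i _ => div_pos (hσ' i) hc
  set Zb := Zs + ∑ i, σ' i
  have hS : 0 < ∑ i, σ' i := Finset.sum_pos (fun i _ => hσ' i) hι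
  have hfZs : ∑ i, cappedRescale c Zs σ' i = Fintype.card ι * c :=
    sum_cappedRescale_eq_card_mul fun i => by
      rw [le_div_iff₀ hZs, mul_comm, ← le_div_iff₀ hc]
      exact Finset.inf'_le _ (Finset.mem_univ i)
  have hfZb : ∑ i, cappedRescale c Zb σ' i < 1 :=
    calc ∑ i, cappedRescale c Zb σ' i ≤ ∑ i, σ' i / Zb :=
          Finset.sum_le_sum fun i _ => min_le_right _ _
      _ < 1 := by rw [← Finset.sum_div, div_lt_one (by positivity)]; linarith
  have hcont : ContinuousOn (fun Z => ∑ i, cappedRescale c Z σ' i) (Set.Icc Zs Zb) := by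
    refine continuousOn_finsetSum _ fun i _ => continuousOn_const.inf' ?_
    exact continuousOn_const.div continuousOn_id fun x hx => (hZs.trans_le hx.1).ne'
  obtain ⟨Z, hZmem, hZ1⟩ := intermediate_value_Icc' (by linarith) hcont
    ⟨hfZb.le, hfZs ▸ hcard.le⟩
  have hZ : 0 < Z := hZs.trans_le hZmem.1
  -- A solution cannot have all weights capped, so the sum is strictly decreasing through it.
  have hcap : ∀ Z, ∑ i, cappedRescale c Z σ' i = 1 → ∃ i, σ' i / Z < c := by
    intro Z hZ1
    by_contra! h
    rw [sum_cappedRescale_eq_card_mul h] at hZ1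
    linarith
  refine ⟨Z, ⟨hZ, hZ1⟩, fun Z' ⟨hZ', hZ'1⟩ => ?_⟩
  rcases lt_trichotomy Z' Z with h | h | h
  · linarith [sum_cappedRescale_lt_of_lt hZ' h hσ' (hcap Z hZ1)]
  · exact h
  · linarith [sum_cappedRescale_lt_of_lt hZ h hσ' (hcap Z' hZ'1)]

end CappedRescale

theorem cappedRescale_dotProduct_log_sub_lt {ι : Type*} [Fintype ι] [DecidableEq ι] {c Z : ℝ}
    (hc : 0 < c) (hZ : 0 < Z) {σ' : ι → ℝ} (hσ' : ∀ i, 0 < σ' i)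
    (hσ1 : ∑ i, cappedRescale c Z σ' i = 1) {Q : Matrix ι ι ℝ} (hQ : Q ∈ doublyStochastic ℝ ι)
    {μ : ι → ℝ} (hμ0 : ∀ i, 0 ≤ μ i) (hμc : ∀ i, μ i ≤ c) (hμ1 : ∑ i, μ i = 1)
    (hne : ∃ i j, Q i j ≠ 0 ∧ μ i ≠ cappedRescale c Z σ' j) :
    cappedRescale c Z σ' ⬝ᵥ (fun i => Real.log (cappedRescale c Z σ' i)) -
        cappedRescale c Z σ' ⬝ᵥ (fun i => Real.log (σ' i)) <
      μ ⬝ᵥ (fun i => Real.log (μ i)) - (μ ᵥ* Q) ⬝ᵥ (fun i => Real.log (σ' i)) := by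
  have hmix := vecMul_dotProduct_log_lt_of_mem_doublyStochastic hQ hμ0
    (cappedRescale_pos hc hZ hσ') (hμ1.trans hσ1.symm) hne
  have hcap := cappedRescale_dotProduct_log_sub_le hc hZ hσ'
    (vecMul_le_of_mem_doublyStochastic hQ hμc)
    ((sum_vecMul_of_mem_doublyStochastic hQ μ).trans (hμ1.trans hσ1.symm))
  linarith

section RelativeEntropy

variable {d : ℕ} {U V : Matrix (Fin d) (Fin d) ℝ}

theorem matLog_mul_diagonal_mul_transpose (hV : V * Vᵀ = 1) (a : Fin d → ℝ) :
    matLog (V * diagonal a * Vᵀ) = V * diagonal (fun i => Real.log (a i)) * Vᵀ := by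
  have hA := isHermitian_mul_diagonal_mul_transpose V a
  rw [matLog, dif_pos hA, star_eq_conjTranspose, conjTranspose_eq_transpose_of_trivial]
  exact mul_diagonal_mul_transpose_map_eq hA.eigenvectorUnitary_mul_transpose hV
    hA.eq_eigenvectorUnitary_mul_diagonal_mul_transpose.symm Real.log

theorem quantumRelEnt_mul_diagonal_mul_transpose (hU : U * Uᵀ = 1) (hV : V * Vᵀ = 1)
    (μ σ : Fin d → ℝ) :
    quantumRelEnt (U * diagonal μ * Uᵀ) (V * diagonal σ * Vᵀ) =
      μ ⬝ᵥ (fun i => Real.log (μ i)) -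
        (μ ᵥ* ((Uᵀ * V) ⊙ (Uᵀ * V))) ⬝ᵥ (fun j => Real.log (σ j)) := by
  rw [quantumRelEnt, Matrix.mul_sub, trace_sub, matLog_mul_diagonal_mul_transpose hU,
    matLog_mul_diagonal_mul_transpose hV, trace_mul_diagonal_mul_transpose_mul,
    trace_mul_diagonal_mul_transpose_mul, mul_eq_one_comm.mp hU, hadamard_one, diag_one,
    diagonal_one', vecMul_one]

theorem quantumRelEnt_mul_diagonal_mul_transpose_same (hV : V * Vᵀ = 1) (σ σ' : Fin d → ℝ) :
    quantumRelEnt (V * diagonal σ * Vᵀ) (V * diagonal σ' * Vᵀ) =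
      σ ⬝ᵥ (fun i => Real.log (σ i)) - σ ⬝ᵥ (fun j => Real.log (σ' j)) := by
  rw [quantumRelEnt_mul_diagonal_mul_transpose hV hV, mul_eq_one_comm.mp hV, hadamard_one,
    diag_one, diagonal_one', vecMul_one]

end RelativeEntropy

theorem quantumRelEnt_cappedRescale_lt {d : ℕ} {c Z : ℝ} (hc : 0 < c) (hZ : 0 < Z)
    {V : Matrix (Fin d) (Fin d) ℝ} (hV : V * Vᵀ = 1) {σ' : Fin d → ℝ} (hσ' : ∀ i, 0 < σ' i)
    (hσ1 : ∑ i, cappedRescale c Z σ' i = 1) {M : Matrix (Fin d) (Fin d) ℝ}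
    (hM : M.PosSemidef) (hMc : (c • 1 - M).PosSemidef) (hM1 : M.trace = 1)
    (hne : M ≠ V * diagonal (cappedRescale c Z σ') * Vᵀ) :
    quantumRelEnt (V * diagonal (cappedRescale c Z σ') * Vᵀ) (V * diagonal σ' * Vᵀ) <
      quantumRelEnt M (V * diagonal σ' * Vᵀ) := by
  set U := (hM.isHermitian.eigenvectorUnitary : Matrix (Fin d) (Fin d) ℝ)
  set μ := hM.isHermitian.eigenvalues
  have hU : U * Uᵀ = 1 := hM.isHermitian.eigenvectorUnitary_mul_transpose
  have hMU : M = U * diagonal μ * Uᵀ :=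
    hM.isHermitian.eq_eigenvectorUnitary_mul_diagonal_mul_transpose
  have hμc : ∀ i, 0 ≤ c - μ i := by
    rwa [hMU, smul_one_eq_mul_diagonal_mul_transpose hU, ← Matrix.sub_mul, ← Matrix.mul_sub,
      diagonal_sub, posSemidef_mul_diagonal_mul_transpose_iff hU] at hMc
  have hQ : (Uᵀ * V) ⊙ (Uᵀ * V) ∈ doublyStochastic ℝ (Fin d) :=
    hadamard_self_mem_doublyStochastic <| by
      rw [transpose_mul, transpose_transpose, Matrix.mul_assoc, ← Matrix.mul_assoc V, hV,
        Matrix.one_mul, mul_eq_one_comm.mp hU]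
  have hwit : ∃ i j, ((Uᵀ * V) ⊙ (Uᵀ * V)) i j ≠ 0 ∧ μ i ≠ cappedRescale c Z σ' j := by
    rw [hMU, Ne, mul_diagonal_mul_transpose_eq_iff hU hV,
      diagonal_mul_eq_mul_diagonal_iff] at hne
    push Not at hne
    obtain ⟨i, j, hij, hμσ⟩ := hne
    exact ⟨i, j, mul_ne_zero hij hij, hμσ⟩
  rw [quantumRelEnt_mul_diagonal_mul_transpose_same hV, hMU,
    quantumRelEnt_mul_diagonal_mul_transpose hU hV]
  exact cappedRescale_dotProduct_log_sub_lt hc hZ hσ' hσ1 hQ hM.eigenvalues_nonneg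
    (fun i => sub_nonneg.1 (hμc i))
    (by rwa [hMU, trace_mul_diagonal_mul_transpose hU] at hM1) hwit

theorem mul_diagonal_mul_transpose_mem_feasWK {d k : ℕ} {V : Matrix (Fin d) (Fin d) ℝ}
    (hV : V * Vᵀ = 1) {a : Fin d → ℝ} (ha0 : ∀ i, 0 ≤ a i)
    (hac : ∀ i, a i ≤ 1 / ((d : ℝ) - (k : ℝ))) (ha1 : ∑ i, a i = 1) :
    V * diagonal a * Vᵀ ∈ feasWK d k := by
  refine ⟨(posSemidef_mul_diagonal_mul_transpose_iff hV).2 ha0, ?_,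
    (trace_mul_diagonal_mul_transpose hV a).trans ha1⟩
  rw [smul_one_eq_mul_diagonal_mul_transpose hV, ← Matrix.sub_mul, ← Matrix.mul_sub,
    diagonal_sub, posSemidef_mul_diagonal_mul_transpose_iff hV]
  exact fun i => sub_nonneg.2 (hac i)

/-- The relative-entropy projection of a positive definite symmetric matrix
`W' = V diag(σ') Vᵀ` onto the Warmuth–Kuzmin feasible set has the same eigenvectors,
with eigenvalues `min(1/(d-k), σ'ᵢ/Z)` for a unique normalizing constant `Z > 0`. -/
theorem stmt9 (d k : ℕ) (hk : 0 < k) (hkd : k < d)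
    (V : Matrix (Fin d) (Fin d) ℝ) (hV : V * Vᵀ = 1)
    (σ' : Fin d → ℝ) (hσ : ∀ i, 0 < σ' i) :
    ∃ Z : ℝ, 0 < Z ∧
      (∑ i, min (1 / ((d : ℝ) - (k : ℝ))) (σ' i / Z)) = 1 ∧
      (∀ Z' : ℝ, 0 < Z' →
        (∑ i, min (1 / ((d : ℝ) - (k : ℝ))) (σ' i / Z')) = 1 → Z' = Z) ∧
      (V * Matrix.diagonal (fun i => min (1 / ((d : ℝ) - (k : ℝ))) (σ' i / Z)) * Vᵀ)
        ∈ feasWK d k ∧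
      ∀ M ∈ feasWK d k,
        M ≠ V * Matrix.diagonal (fun i => min (1 / ((d : ℝ) - (k : ℝ))) (σ' i / Z)) * Vᵀ →
        quantumRelEnt
            (V * Matrix.diagonal (fun i => min (1 / ((d : ℝ) - (k : ℝ))) (σ' i / Z)) * Vᵀ)
            (V * Matrix.diagonal σ' * Vᵀ)
          < quantumRelEnt M (V * Matrix.diagonal σ' * Vᵀ) := by
  have hdk : (0 : ℝ) < d - k := sub_pos.2 (by exact_mod_cast hkd)
  have hc : 0 < 1 / ((d : ℝ) - (k : ℝ)) := one_div_pos.2 hdk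
  have hcard : 1 < Fintype.card (Fin d) * (1 / ((d : ℝ) - (k : ℝ))) := by
    rw [Fintype.card_fin, mul_one_div, one_lt_div hdk, sub_lt_self_iff]
    exact_mod_cast hk
  obtain ⟨Z, ⟨hZ, hZ1⟩, huniq⟩ := existsUnique_sum_cappedRescale_eq_one hc hcard hσ
  refine ⟨Z, hZ, hZ1, fun Z' hZ' hZ'1 => huniq Z' ⟨hZ', hZ'1⟩,
    mul_diagonal_mul_transpose_mem_feasWK hV (fun i => (cappedRescale_pos hc hZ hσ i).le)
      (fun i => min_le_left _ _) hZ1,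
    fun M ⟨hM, hMc, hM1⟩ hne => quantumRelEnt_cappedRescale_lt hc hZ hV hσ hZ1 hM hMc hM1 hne⟩
end

section
/- Let M' be a symmetric d×d real matrix with eigenvalues σ'₁,…,σ'_d and orthonormal eigenvectors v'₁,…,v'_d, and let 0 < k < d. The unique minimizer M of the Frobenius distance ‖M - M'‖_F over the set {M symmetric : 0 ⪯ M ⪯ I, tr M = k} has the same eigenvectors as M', with eigenvalues σᵢ = max(0, min(1, σ'ᵢ + S)) for some constant S ∈ ℝ chosen so that Σᵢ σᵢ = k. -/
open Matrix

/-- Squared Frobenius norm `‖A‖_F² = tr (Aᵀ A)`. -/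
noncomputable def frobSq {d : ℕ} (A : Matrix (Fin d) (Fin d) ℝ) : ℝ :=
  (Aᵀ * A).trace

/-- The MSG feasible set (matrix capped simplex): `0 ⪯ M ⪯ I`, `tr M = k`. -/
def feasMSG (d k : ℕ) : Set (Matrix (Fin d) (Fin d) ℝ) :=
  {M | M.PosSemidef ∧ ((1 : Matrix (Fin d) (Fin d) ℝ) - M).PosSemidef ∧
    M.trace = (k : ℝ)}

/-! Conjugating by the orthogonal `V` preserves both the Frobenius norm and the capped simplex,
so it suffices to treat `M' = D' = diag σ'`. For `D = diag (max 0 (min 1 (σ' + S)))` and any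
feasible `A`, the variational inequality `⟪A - D, D - D'⟫ ≥ 0` only involves the diagonal
entries `Aᵢᵢ ∈ [0, 1]`: there it is the scalar projection inequality for `[0, 1]`, and the shift
contributes `S (tr A - tr D) = 0`. Pythagoras then gives `‖A - D'‖² ≥ ‖A - D‖² + ‖D - D'‖²`,
which is minimality and uniqueness at once. The shift `S` exists by the intermediate value
theorem, the clamped sum running continuously from `0` to `d`. -/

lemma sub_mul_max_zero_min_one_sub_nonneg {a : ℝ} (ha : a ∈ Set.Icc 0 1) (t : ℝ) :
    0 ≤ (a - max 0 (min 1 t)) * (max 0 (min 1 t) - t) := by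
  obtain ⟨ha0, ha1⟩ := ha
  rcases le_total t 0 with ht0 | ht0
  · rw [min_eq_right (ht0.trans zero_le_one), max_eq_left ht0]
    nlinarith
  rcases le_total t 1 with ht1 | ht1
  · rw [min_eq_right ht1, max_eq_right ht0]
    simp
  · rw [min_eq_left ht1, max_eq_right zero_le_one]
    nlinarith

lemma exists_sum_max_zero_min_one_add_eq {ι : Type*} [Fintype ι] (s : ι → ℝ) {k : ℝ}
    (hk0 : 0 ≤ k) (hk : k ≤ Fintype.card ι) :
    ∃ S, ∑ i, max 0 (min 1 (s i + S)) = k := by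
  set C := 1 + ∑ i, |s i|
  have hsC : ∀ i, |s i| + 1 ≤ C := fun i => by
    linarith [Finset.single_le_sum (fun j _ => abs_nonneg (s j)) (Finset.mem_univ i)]
  have hcont : Continuous fun S => ∑ i, max 0 (min 1 (s i + S)) := by fun_prop
  have hlow : ∑ i, max 0 (min 1 (s i + -C)) = 0 := Finset.sum_eq_zero fun i _ => by
    have : s i + -C ≤ 0 := by linarith [hsC i, le_abs_self (s i)]
    rw [min_eq_right (this.trans zero_le_one), max_eq_left this]
  have hhigh : ∑ i, max 0 (min 1 (s i + C)) = Fintype.card ι := by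
    calc ∑ i, max 0 (min 1 (s i + C)) = ∑ _i : ι, (1 : ℝ) := Finset.sum_congr rfl fun i _ => by
          have : 1 ≤ s i + C := by linarith [hsC i, neg_abs_le (s i)]
          rw [min_eq_left this, max_eq_right zero_le_one]
      _ = Fintype.card ι := by simp
  exact intermediate_value_univ (-C) C hcont
    (by simp only [Set.mem_Icc, hlow, hhigh]; exact ⟨hk0, hk⟩)

lemma trace_transpose_mul_diagonal {n R : Type*} [Fintype n] [DecidableEq n] [CommSemiring R]
    (B : Matrix n n R) (s : n → R) :
    (Bᵀ * diagonal s).trace = ∑ i, B i i * s i := by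
  simp [trace, mul_diagonal]

section Frobenius

variable {d : ℕ}

lemma frobSq_eq_trace_conjTranspose_mul_self (A : Matrix (Fin d) (Fin d) ℝ) :
    frobSq A = (Aᴴ * A).trace := by
  rw [frobSq, conjTranspose_eq_transpose_of_trivial]

lemma frobSq_nonneg (A : Matrix (Fin d) (Fin d) ℝ) : 0 ≤ frobSq A := by
  rw [frobSq_eq_trace_conjTranspose_mul_self]
  exact (posSemidef_conjTranspose_mul_self A).trace_nonneg

lemma frobSq_pos {A : Matrix (Fin d) (Fin d) ℝ} (hA : A ≠ 0) : 0 < frobSq A := by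
  refine (frobSq_nonneg A).lt_of_ne' ?_
  rwa [frobSq_eq_trace_conjTranspose_mul_self, Ne, trace_conjTranspose_mul_self_eq_zero_iff]

lemma frobSq_add (B C : Matrix (Fin d) (Fin d) ℝ) :
    frobSq (B + C) = frobSq B + frobSq C + 2 * (Bᵀ * C).trace := by
  have hsymm : (Cᵀ * B).trace = (Bᵀ * C).trace := by
    rw [← trace_transpose, transpose_mul, transpose_transpose]
  simp only [frobSq, transpose_add, add_mul, mul_add, trace_add, hsymm]
  ring

lemma frobSq_conj_sub_conj {V : Matrix (Fin d) (Fin d) ℝ} (hV : Vᵀ * V = 1)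
    (A B : Matrix (Fin d) (Fin d) ℝ) :
    frobSq (V * A * Vᵀ - V * B * Vᵀ) = frobSq (A - B) := by
  set C := A - B
  have hmul : (V * C * Vᵀ)ᵀ * (V * C * Vᵀ) = V * (Cᵀ * C) * Vᵀ := by
    simp only [transpose_mul, transpose_transpose, Matrix.mul_assoc]
    rw [← Matrix.mul_assoc Vᵀ V, hV, Matrix.one_mul]
  rw [← Matrix.sub_mul, ← Matrix.mul_sub, frobSq, hmul, trace_mul_cycle, hV, Matrix.one_mul,
    frobSq]

end Frobenius

section CappedSimplex

variable {d k : ℕ}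

lemma conj_mem_feasMSG {V N : Matrix (Fin d) (Fin d) ℝ} (hV : V * Vᵀ = 1)
    (hN : N ∈ feasMSG d k) : Vᵀ * N * V ∈ feasMSG d k := by
  obtain ⟨hN0, hN1, htr⟩ := hN
  have hone_sub : 1 - Vᵀ * N * V = Vᵀ * (1 - N) * V := by
    rw [Matrix.mul_sub, Matrix.sub_mul, Matrix.mul_one, mul_eq_one_comm.mp hV]
  refine ⟨?_, ?_, ?_⟩
  · simpa using hN0.conjTranspose_mul_mul_same V
  · simpa [hone_sub] using hN1.conjTranspose_mul_mul_same V
  · rw [trace_mul_cycle, hV, Matrix.one_mul, htr]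

lemma diagonal_mem_feasMSG {σ : Fin d → ℝ} (hσ : ∀ i, σ i ∈ Set.Icc 0 1)
    (hsum : ∑ i, σ i = k) : diagonal σ ∈ feasMSG d k := by
  refine ⟨?_, ?_, by rwa [trace_diagonal]⟩
  · exact posSemidef_diagonal_iff.mpr fun i => (hσ i).1
  · rw [← diagonal_one, diagonal_sub]
    exact posSemidef_diagonal_iff.mpr fun i => sub_nonneg.mpr (hσ i).2

lemma diag_mem_Icc_of_mem_feasMSG {N : Matrix (Fin d) (Fin d) ℝ} (hN : N ∈ feasMSG d k)
    (i : Fin d) : N i i ∈ Set.Icc 0 1 := by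
  have h1 := hN.2.1.diag_nonneg (i := i)
  rw [Matrix.sub_apply, one_apply_eq] at h1
  exact ⟨hN.1.diag_nonneg, sub_nonneg.mp h1⟩

lemma frobSq_sub_diagonal_add_le {σ' : Fin d → ℝ} {S : ℝ}
    (hS : ∑ i, max 0 (min 1 (σ' i + S)) = k) {A : Matrix (Fin d) (Fin d) ℝ}
    (hA : A ∈ feasMSG d k) :
    frobSq (A - diagonal fun i => max 0 (min 1 (σ' i + S))) +
        frobSq ((diagonal fun i => max 0 (min 1 (σ' i + S))) - diagonal σ')
      ≤ frobSq (A - diagonal σ') := by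
  set σ : Fin d → ℝ := fun i => max 0 (min 1 (σ' i + S))
  have hcross : 0 ≤ ((A - diagonal σ)ᵀ * (diagonal σ - diagonal σ')).trace := by
    have htrA : ∑ i, A i i = k := hA.2.2
    rw [diagonal_sub, trace_transpose_mul_diagonal]
    calc (0 : ℝ) ≤ ∑ i, (A i i - σ i) * (σ i - (σ' i + S)) + S * (∑ i, A i i - ∑ i, σ i) := by
          rw [htrA, hS, sub_self, mul_zero, add_zero]
          exact Finset.sum_nonneg fun i _ =>
            sub_mul_max_zero_min_one_sub_nonneg (diag_mem_Icc_of_mem_feasMSG hA i) _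
      _ = ∑ i, (A - diagonal σ) i i * (σ i - σ' i) := by
          simp only [mul_sub, Finset.mul_sum, ← Finset.sum_sub_distrib, ← Finset.sum_add_distrib]
          exact Finset.sum_congr rfl fun i _ => by rw [Matrix.sub_apply, diagonal_apply_eq]; ring
  have hsplit : A - diagonal σ' = (A - diagonal σ) + (diagonal σ - diagonal σ') := by abel
  rw [hsplit, frobSq_add]
  linarith

end CappedSimplex

theorem stmt10_general (d k : ℕ) (hkd : k < d)
    (V : Matrix (Fin d) (Fin d) ℝ) (hV : V * Vᵀ = 1) (σ' : Fin d → ℝ) :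
    ∃ S : ℝ,
      (∑ i, max 0 (min 1 (σ' i + S))) = (k : ℝ) ∧
      (V * Matrix.diagonal (fun i => max 0 (min 1 (σ' i + S))) * Vᵀ) ∈ feasMSG d k ∧
      ∀ N ∈ feasMSG d k,
        frobSq (V * Matrix.diagonal (fun i => max 0 (min 1 (σ' i + S))) * Vᵀ -
            V * Matrix.diagonal σ' * Vᵀ)
          ≤ frobSq (N - V * Matrix.diagonal σ' * Vᵀ) ∧
        (N ≠ V * Matrix.diagonal (fun i => max 0 (min 1 (σ' i + S))) * Vᵀ →
          frobSq (V * Matrix.diagonal (fun i => max 0 (min 1 (σ' i + S))) * Vᵀ -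
              V * Matrix.diagonal σ' * Vᵀ)
            < frobSq (N - V * Matrix.diagonal σ' * Vᵀ)) := by
  obtain ⟨S, hS⟩ := exists_sum_max_zero_min_one_add_eq σ' k.cast_nonneg
    (by simpa using hkd.le)
  set σ : Fin d → ℝ := fun i => max 0 (min 1 (σ' i + S))
  have hVt : Vᵀ * V = 1 := mul_eq_one_comm.mp hV
  have hσ : ∀ i, σ i ∈ Set.Icc 0 1 := fun i =>
    ⟨le_max_left _ _, max_le zero_le_one (min_le_left _ _)⟩
  refine ⟨S, hS, ?_, fun N hN => ?_⟩
  · simpa using conj_mem_feasMSG (V := Vᵀ) (by simpa using hVt) (diagonal_mem_feasMSG hσ hS)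
  set A := Vᵀ * N * V
  have hNA : N = V * A * Vᵀ := by
    simp only [A, ← Matrix.mul_assoc, hV, Matrix.one_mul]
    rw [Matrix.mul_assoc, hV, Matrix.mul_one]
  have key := frobSq_sub_diagonal_add_le hS (conj_mem_feasMSG hV hN)
  rw [hNA, frobSq_conj_sub_conj hVt, frobSq_conj_sub_conj hVt]
  refine ⟨by linarith [frobSq_nonneg (A - diagonal σ)], fun hne => ?_⟩
  have hAσ : A - diagonal σ ≠ 0 := sub_ne_zero.mpr fun h => hne (by rw [h])
  linarith [frobSq_pos hAσ]

/-- The Frobenius projection of a symmetric matrix `M' = V diag(σ') Vᵀ` onto the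
matrix capped simplex has the same eigenvectors, with eigenvalues
`max(0, min(1, σ'ᵢ + S))` for a shift `S` making the eigenvalues sum to `k`;
this projection is the unique minimizer. -/
theorem stmt10 (d k : ℕ) (hk : 0 < k) (hkd : k < d)
    (V : Matrix (Fin d) (Fin d) ℝ) (hV : V * Vᵀ = 1) (σ' : Fin d → ℝ) :
    ∃ S : ℝ,
      (∑ i, max 0 (min 1 (σ' i + S))) = (k : ℝ) ∧
      (V * Matrix.diagonal (fun i => max 0 (min 1 (σ' i + S))) * Vᵀ) ∈ feasMSG d k ∧
      ∀ N ∈ feasMSG d k,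
        frobSq (V * Matrix.diagonal (fun i => max 0 (min 1 (σ' i + S))) * Vᵀ -
            V * Matrix.diagonal σ' * Vᵀ)
          ≤ frobSq (N - V * Matrix.diagonal σ' * Vᵀ) ∧
        (N ≠ V * Matrix.diagonal (fun i => max 0 (min 1 (σ' i + S))) * Vᵀ →
          frobSq (V * Matrix.diagonal (fun i => max 0 (min 1 (σ' i + S))) * Vᵀ -
              V * Matrix.diagonal σ' * Vᵀ)
            < frobSq (N - V * Matrix.diagonal σ' * Vᵀ)) :=
  stmt10_general d k hkd V hV σ'
end

section
/- Projection onto the capped simplex: let σ' ∈ ℝᵈ and 0 < k < d. The Euclidean projection of σ' onto {σ ∈ ℝᵈ : 0 ≤ σᵢ ≤ 1 ∀i, Σᵢ σᵢ = k} is given coordinatewise by σᵢ = max(0, min(1, σ'ᵢ + S)) for some S ∈ ℝ with Σᵢ max(0, min(1, σ'ᵢ + S)) = k; moreover such an S exists, and the resulting σ is the unique projection. -/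
/-- Euclidean projection onto the capped simplex
`{σ : 0 ≤ σᵢ ≤ 1, Σσᵢ = k}` is given by a coordinatewise shift-and-clip
`σᵢ = max(0, min(1, σ'ᵢ + S))`; such a shift `S` exists and the resulting point is
the unique projection. -/
theorem stmt11 (d k : ℕ) (hk : 0 < k) (hkd : k < d) (σ' : Fin d → ℝ) :
    ∃ S : ℝ,
      (∑ i, max 0 (min 1 (σ' i + S))) = (k : ℝ) ∧
      (∀ i, 0 ≤ max 0 (min 1 (σ' i + S)) ∧ max 0 (min 1 (σ' i + S)) ≤ 1) ∧
      ∀ τ : Fin d → ℝ, (∀ i, 0 ≤ τ i ∧ τ i ≤ 1) → (∑ i, τ i) = (k : ℝ) →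
        (∑ i, (max 0 (min 1 (σ' i + S)) - σ' i) ^ 2) ≤ (∑ i, (τ i - σ' i) ^ 2) ∧
        (τ ≠ (fun i => max 0 (min 1 (σ' i + S))) →
          (∑ i, (max 0 (min 1 (σ' i + S)) - σ' i) ^ 2) < ∑ i, (τ i - σ' i) ^ 2) := by
  have hd : 0 < d := lt_trans hk hkd
  have hne : (Finset.univ : Finset (Fin d)).Nonempty := ⟨⟨0, hd⟩, Finset.mem_univ _⟩
  set f : ℝ → ℝ := fun S => ∑ i, max 0 (min 1 (σ' i + S)) with hf
  have hcont : Continuous f := by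
    apply continuous_finset_sum
    intro i _
    exact continuous_const.max (continuous_const.min (continuous_const.add continuous_id))
  set a : ℝ := -(Finset.univ.sup' hne σ') with ha
  set b : ℝ := 1 - Finset.univ.inf' hne σ' with hb
  have hab : a ≤ b := by
    have h1 := Finset.inf'_le σ' (Finset.mem_univ ⟨0, hd⟩)
    have h2 := Finset.le_sup' σ' (Finset.mem_univ (⟨0, hd⟩ : Fin d))
    rw [ha, hb]; linarith
  have hfa : f a = 0 := by
    rw [hf]
    apply Finset.sum_eq_zero
    intro i _
    have h1 : σ' i + a ≤ 0 := by
      have := Finset.le_sup' σ' (Finset.mem_univ i)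
      rw [ha]; linarith
    exact max_eq_left (le_trans (min_le_right _ _) h1)
  have hfb : f b = d := by
    show (∑ i, max 0 (min 1 (σ' i + b))) = (d:ℝ)
    have : ∀ i ∈ Finset.univ, max 0 (min 1 (σ' i + b)) = 1 := by
      intro i _
      have h1 : (1:ℝ) ≤ σ' i + b := by
        have := Finset.inf'_le σ' (Finset.mem_univ i)
        rw [hb]; linarith
      rw [min_eq_left h1, max_eq_right zero_le_one]
    rw [Finset.sum_congr rfl this]
    simp
  have hmem : (k:ℝ) ∈ Set.Icc (f a) (f b) := by
    rw [hfa, hfb]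
    constructor
    · positivity
    · exact_mod_cast hkd.le
  obtain ⟨S, -, hS⟩ := intermediate_value_Icc hab hcont.continuousOn hmem
  refine ⟨S, hS, fun i => ⟨le_max_left _ _, max_le zero_le_one (min_le_left _ _)⟩, ?_⟩
  intro τ hτ hτsum
  set σ : Fin d → ℝ := fun i => max 0 (min 1 (σ' i + S)) with hσ
  have key : ∀ i, 0 ≤ (τ i - σ i) * (σ i - σ' i - S) := by
    intro i
    rcases le_or_gt (σ' i + S) 0 with h | h
    · have hσi : σ i = 0 := max_eq_left (le_trans (min_le_right _ _) h)
      rw [hσi]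
      have := (hτ i).1
      nlinarith
    rcases le_or_gt 1 (σ' i + S) with h2 | h2
    · have hσi : σ i = 1 := by rw [hσ]; simp [min_eq_left h2, max_eq_right (zero_le_one : (0:ℝ) ≤ 1)]
      rw [hσi]
      have := (hτ i).2
      nlinarith
    · have hσi : σ i = σ' i + S := by
        rw [hσ]; simp only [min_eq_right h2.le, max_eq_right h.le]
      rw [hσi]; ring_nf; nlinarith [le_refl (0:ℝ)]
  have hsum_eq : ∑ i, σ i = (k:ℝ) := hS
  have hcross : 0 ≤ ∑ i, (τ i - σ i) * (σ i - σ' i) := by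
    have h1 : ∑ i, (τ i - σ i) * (σ i - σ' i)
        = ∑ i, ((τ i - σ i) * (σ i - σ' i - S) + S * (τ i - σ i)) := by
      apply Finset.sum_congr rfl
      intro i _
      ring
    rw [h1, Finset.sum_add_distrib, ← Finset.mul_sum, Finset.sum_sub_distrib,
      hτsum, hsum_eq, sub_self, mul_zero, add_zero]
    exact Finset.sum_nonneg fun i _ => key i
  have hiden : ∑ i, (τ i - σ' i)^2
      = ∑ i, (σ i - σ' i)^2 + ∑ i, (τ i - σ i)^2
        + 2 * ∑ i, (τ i - σ i) * (σ i - σ' i) := by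
    rw [Finset.mul_sum, ← Finset.sum_add_distrib, ← Finset.sum_add_distrib]
    apply Finset.sum_congr rfl
    intro i _
    ring
  have hsqnn : 0 ≤ ∑ i, (τ i - σ i)^2 := Finset.sum_nonneg fun i _ => sq_nonneg _
  constructor
  · linarith
  · intro hne'
    have : ∃ j, τ j ≠ σ j := by
      by_contra hc
      push_neg at hc
      exact hne' (funext hc)
    obtain ⟨j, hj⟩ := this
    have hjj : τ j - σ j ≠ 0 := sub_ne_zero.mpr hj
    have hpos : 0 < (τ j - σ j)^2 := by positivity
    have hle : (τ j - σ j)^2 ≤ ∑ i, (τ i - σ i)^2 :=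
      Finset.single_le_sum (f := fun i => (τ i - σ i)^2) (fun i _ => sq_nonneg _) (Finset.mem_univ j)
    linarith
end

section
/- Exact line search for the power method: let Σ = diag(σ₁,…,σ_d) with σᵢ ≥ 0, and let u ∈ ℝᵈ be nonzero. Define R(η) = ((ηu + Σu)ᵀ Σ (ηu + Σu)) / ‖ηu + Σu‖² (the Rayleigh quotient of the updated vector). Then dR/dη ≤ 0 for all η ≥ 0; concretely, dR/dη = -2·[Σ_{i<j} uᵢ²uⱼ²(η+σᵢ)(η+σⱼ)(σᵢ-σⱼ)²] / ‖ηu + Σu‖⁴ ≤ 0 for η ≥ 0. Hence η = 0 (the pure power-method step) maximizes the Rayleigh quotient among nonnegative step sizes. -/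
/-!
Write `R = N / D`, `x i = η + σ i` and `w i = u i ^ 2`. The quotient rule gives
`R' = (N' D - N D') / D²`, and after expanding `N' D - N D'` as a double sum, pairing the
`(i, j)` and `(j, i)` terms turns it into `-2 ∑_{i<j} w i w j x i x j (σ i - σ j)²`, which is
`≤ 0` as soon as every `x i ≥ 0`. So `R` is antitone on `[0, ∞)` and its maximum there is at
`η = 0`.
-/

/-- The Rayleigh quotient of the updated vector `ηu + Σu` for `Σ = diag(σ)`. -/
noncomputable def rayleigh {d : ℕ} (σ u : Fin d → ℝ) (η : ℝ) : ℝ :=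
  (∑ i, (u i) ^ 2 * σ i * (η + σ i) ^ 2) / (∑ i, (u i) ^ 2 * (η + σ i) ^ 2)

open Finset

noncomputable def rayleighDenom {d : ℕ} (σ u : Fin d → ℝ) (η : ℝ) : ℝ :=
  ∑ i, u i ^ 2 * (η + σ i) ^ 2

noncomputable def weightedGapSum {d : ℕ} (σ u : Fin d → ℝ) (η : ℝ) : ℝ :=
  ∑ p ∈ univ.filter (fun p : Fin d × Fin d => p.1 < p.2),
    u p.1 ^ 2 * u p.2 ^ 2 * (η + σ p.1) * (η + σ p.2) * (σ p.1 - σ p.2) ^ 2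

theorem Finset.sum_univ_prod_eq_sum_lt_add_swap {ι M : Type*} [Fintype ι] [LinearOrder ι]
    [AddCommMonoid M] (F : ι × ι → M) (hF : ∀ i, F (i, i) = 0) :
    ∑ p, F p = ∑ p : ι × ι with p.1 < p.2, (F p + F p.swap) := by
  have hsplit : ∀ p : ι × ι,
      F p = (if p.1 < p.2 then F p else 0) + (if p.2 < p.1 then F p else 0) := by
    rintro ⟨i, j⟩
    rcases lt_trichotomy i j with h | rfl | h
    · simp [h, h.not_gt]
    · simp [hF]
    · simp [h, h.not_gt]
  have hswap : ∑ p : ι × ι, (if p.2 < p.1 then F p else 0) =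
      ∑ p : ι × ι, (if p.1 < p.2 then F p.swap else 0) :=
    Fintype.sum_equiv (Equiv.prodComm ι ι) _ _ fun p => rfl
  rw [sum_congr rfl fun p _ => hsplit p, sum_add_distrib, hswap, ← sum_add_distrib, sum_filter]
  exact sum_congr rfl fun p _ => by split_ifs <;> simp

section
variable {ι : Type*} [Fintype ι]

theorem hasDerivAt_sum_mul_add_sq (c a : ι → ℝ) (η : ℝ) :
    HasDerivAt (fun x => ∑ i, c i * (x + a i) ^ 2) (∑ i, c i * (2 * (η + a i))) η := by
  refine HasDerivAt.fun_sum fun i _ => HasDerivAt.const_mul _ ?_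
  simpa using ((hasDerivAt_id η).add_const (a i)).fun_pow 2

theorem sum_mul_sum_sub_sum_mul_sum_eq_neg_two_mul [LinearOrder ι] (w σ : ι → ℝ) (η : ℝ) :
    (∑ i, w i * σ i * (2 * (η + σ i))) * (∑ i, w i * (η + σ i) ^ 2) -
        (∑ i, w i * σ i * (η + σ i) ^ 2) * (∑ i, w i * (2 * (η + σ i))) =
      -2 * ∑ p : ι × ι with p.1 < p.2,
        w p.1 * w p.2 * (η + σ p.1) * (η + σ p.2) * (σ p.1 - σ p.2) ^ 2 := by
  simp only [sum_mul_sum, ← sum_sub_distrib]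
  rw [← Fintype.sum_prod_type', sum_univ_prod_eq_sum_lt_add_swap _ fun i => by ring, mul_sum]
  exact sum_congr rfl fun p _ => by simp only [Prod.fst_swap, Prod.snd_swap]; ring

end

section
variable {d : ℕ} {σ u : Fin d → ℝ} {η : ℝ}

theorem hasDerivAt_rayleigh (hD : rayleighDenom σ u η ≠ 0) :
    HasDerivAt (rayleigh σ u) (-2 * weightedGapSum σ u η / rayleighDenom σ u η ^ 2) η := by
  have h := (hasDerivAt_sum_mul_add_sq (fun i => u i ^ 2 * σ i) σ η).div
    (hasDerivAt_sum_mul_add_sq (fun i => u i ^ 2) σ η) hD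
  rwa [sum_mul_sum_sub_sum_mul_sum_eq_neg_two_mul] at h

theorem weightedGapSum_nonneg (hσ : ∀ i, 0 ≤ σ i) (hη : 0 ≤ η) :
    0 ≤ weightedGapSum σ u η :=
  sum_nonneg fun p _ => by
    have := add_nonneg hη (hσ p.1)
    have := add_nonneg hη (hσ p.2)
    positivity

theorem neg_two_mul_weightedGapSum_div_nonpos (hσ : ∀ i, 0 ≤ σ i) (hη : 0 ≤ η) :
    -2 * weightedGapSum σ u η / rayleighDenom σ u η ^ 2 ≤ 0 :=
  div_nonpos_of_nonpos_of_nonneg (by linarith [weightedGapSum_nonneg (u := u) hσ hη])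
    (sq_nonneg _)

theorem rayleighDenom_pos (hσ : ∀ i, 0 ≤ σ i) (hden : 0 < ∑ i, u i ^ 2 * σ i ^ 2)
    (hη : 0 ≤ η) : 0 < rayleighDenom σ u η :=
  hden.trans_le <| sum_le_sum fun i _ => by
    gcongr
    · exact hσ i
    · linarith

theorem rayleigh_antitoneOn (hσ : ∀ i, 0 ≤ σ i) (hden : 0 < ∑ i, u i ^ 2 * σ i ^ 2) :
    AntitoneOn (rayleigh σ u) (Set.Ici 0) := by
  have hderiv : ∀ x : ℝ, 0 ≤ x → HasDerivAt (rayleigh σ u)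
      (-2 * weightedGapSum σ u x / rayleighDenom σ u x ^ 2) x := fun x hx =>
    hasDerivAt_rayleigh (rayleighDenom_pos hσ hden hx).ne'
  refine antitoneOn_of_deriv_nonpos (convex_Ici 0)
    (fun x hx => (hderiv x hx).continuousAt.continuousWithinAt)
    (fun x hx => ?_) (fun x hx => ?_) <;> rw [interior_Ici] at hx
  · exact (hderiv x hx.le).differentiableAt.differentiableWithinAt
  · exact (hderiv x hx.le).deriv ▸ neg_two_mul_weightedGapSum_div_nonpos hσ hx.le

end

/-- Exact line search for the power method: for `η ≥ 0` the Rayleigh quotient of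
`ηu + Σu` has the stated nonpositive derivative, hence `η = 0` maximizes it among
nonnegative step sizes. -/
theorem stmt16 (d : ℕ) (σ : Fin d → ℝ) (hσ : ∀ i, 0 ≤ σ i) (u : Fin d → ℝ)
    (hden : 0 < ∑ i, (u i) ^ 2 * (σ i) ^ 2) :
    ∀ η : ℝ, 0 ≤ η →
      HasDerivAt (rayleigh σ u)
        (-2 * (∑ p ∈ Finset.univ.filter (fun p : Fin d × Fin d => p.1 < p.2),
            (u p.1) ^ 2 * (u p.2) ^ 2 * (η + σ p.1) * (η + σ p.2) *
              (σ p.1 - σ p.2) ^ 2) /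
          (∑ i, (u i) ^ 2 * (η + σ i) ^ 2) ^ 2) η ∧
      (-2 * (∑ p ∈ Finset.univ.filter (fun p : Fin d × Fin d => p.1 < p.2),
            (u p.1) ^ 2 * (u p.2) ^ 2 * (η + σ p.1) * (η + σ p.2) *
              (σ p.1 - σ p.2) ^ 2) /
          (∑ i, (u i) ^ 2 * (η + σ i) ^ 2) ^ 2 ≤ 0) ∧
      rayleigh σ u η ≤ rayleigh σ u 0 := by
  intro η hη
  exact ⟨hasDerivAt_rayleigh (rayleighDenom_pos hσ hden hη).ne',
    neg_two_mul_weightedGapSum_div_nonpos hσ hη,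
    rayleigh_antitoneOn hσ hden Set.self_mem_Ici hη hη⟩
end

section
/- Supremum of the scaled negative von Neumann entropy on the Warmuth–Kuzmin feasible set: over 𝒲 = {W symmetric : W ⪰ 0, ‖W‖₂ ≤ 1/(d-k), tr W = 1}, the maximum of Ψ(W) = (1/4)(tr(W log W) + log d) is (1/4)·log(d/(d-k)), attained when W has exactly d-k eigenvalues equal to 1/(d-k); moreover (1/4)·log(d/(d-k)) ≤ (1/4)·k/(d-k). -/
open Matrix

/-- Scaled negative von Neumann entropy `Ψ(W) = (1/4)(tr(W log W) + log d)`. -/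
noncomputable def vnPsi {d : ℕ} (W : Matrix (Fin d) (Fin d) ℝ) : ℝ :=
  (1 / 4 : ℝ) * ((W * matLog W).trace + Real.log d)

/-! With `c = 1/(d-k)` and `f x = x log x`, `tr(W log W) = tr f(W)` by the continuous functional
calculus. A feasible `W` has spectrum in `[0, c]`, where `x log x ≤ x log c`, so `f(W) ≤ (log c) W`
in the Loewner order, and taking traces gives `tr(W log W) ≤ log c · tr W = log c`. Equality holds
as soon as the spectrum lies in `{0, c}`, e.g. for the diagonal matrix with `d - k` entries `c`.
The final estimate is `log x ≤ x - 1`. -/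

open scoped MatrixOrder

lemma Real.mul_log_le_mul_log_of_le {x c : ℝ} (hx : 0 ≤ x) (hxc : x ≤ c) :
    x * Real.log x ≤ x * Real.log c := by
  rcases hx.eq_or_lt with rfl | hx
  · simp
  · exact mul_le_mul_of_nonneg_left (Real.log_le_log hx hxc) hx.le

lemma Real.log_div_sub_le {a b : ℝ} (hb : 0 ≤ b) (hba : b < a) :
    Real.log (a / (a - b)) ≤ b / (a - b) := by
  have hab : 0 < a - b := sub_pos.mpr hba
  calc Real.log (a / (a - b)) ≤ a / (a - b) - 1 :=
        Real.log_le_sub_one_of_pos (div_pos (by linarith) hab)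
    _ = b / (a - b) := by field_simp; ring

section CFC

variable {A : Type*} [Ring A] [StarRing A] [Algebra ℝ A] [TopologicalSpace A]
  [ContinuousFunctionalCalculus ℝ A IsSelfAdjoint] {a : A} {c : ℝ}

lemma cfc_mul_log_le_of_spectrum_subset_Icc [PartialOrder A] [StarOrderedRing A]
    (hsa : IsSelfAdjoint a) (ha : spectrum ℝ a ⊆ Set.Icc 0 c) :
    cfc (fun x => x * Real.log x) a ≤ Real.log c • a := by
  rw [← cfc_const_mul_id (Real.log c) a]
  refine cfc_mono (hf := Real.continuous_mul_log.continuousOn) fun x hx => ?_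
  obtain ⟨hx0, hxc⟩ := ha hx
  simpa [mul_comm] using Real.mul_log_le_mul_log_of_le hx0 hxc

lemma cfc_mul_log_eq_of_spectrum_subset_pair (hsa : IsSelfAdjoint a)
    (ha : spectrum ℝ a ⊆ {0, c}) :
    cfc (fun x => x * Real.log x) a = Real.log c • a := by
  rw [← cfc_const_mul_id (Real.log c) a]
  refine cfc_congr fun x hx => ?_
  rcases ha hx with rfl | rfl <;> simp [mul_comm]

end CFC

namespace Matrix

variable {n : Type*} [Fintype n]

lemma trace_mono {A B : Matrix n n ℝ} (h : A ≤ B) : A.trace ≤ B.trace := by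
  simpa [trace_sub] using (le_iff.mp h).trace_nonneg

variable [DecidableEq n]

lemma spectrum_subset_Icc_of_posSemidef {A : Matrix n n ℝ} {c : ℝ} (hA : A.PosSemidef)
    (hAc : (c • (1 : Matrix n n ℝ) - A).PosSemidef) : spectrum ℝ A ⊆ Set.Icc 0 c := by
  intro x hx
  have h0 : 0 ≤ A := hA.nonneg
  have hc : A ≤ algebraMap ℝ _ c := by rwa [Algebra.algebraMap_eq_smul_one, le_iff]
  exact ⟨spectrum_nonneg_of_nonneg h0 hx,
    (le_algebraMap_iff_spectrum_le hA.1.isSelfAdjoint).mp hc x hx⟩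

end Matrix

lemma matLog_eq_cfc {d : ℕ} {A : Matrix (Fin d) (Fin d) ℝ} (hA : A.IsHermitian) :
    matLog A = cfc Real.log A := by
  rw [hA.cfc_eq, Matrix.IsHermitian.cfc, matLog, dif_pos hA, Unitary.conjStarAlgAut_apply]
  rfl

lemma mul_matLog_eq_cfc {d : ℕ} {A : Matrix (Fin d) (Fin d) ℝ} (hA : A.IsHermitian) :
    A * matLog A = cfc (fun x => x * Real.log x) A := by
  rw [matLog_eq_cfc hA, cfc_mul (fun x => x) Real.log A (hg := A.finite_spectrum.continuousOn _),
    cfc_id' ℝ A]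

section WarmuthKuzmin

variable {d k : ℕ}

lemma spectrum_subset_Icc_of_mem_feasWK {W : Matrix (Fin d) (Fin d) ℝ} (hW : W ∈ feasWK d k) :
    spectrum ℝ W ⊆ Set.Icc 0 (1 / ((d : ℝ) - k)) :=
  Matrix.spectrum_subset_Icc_of_posSemidef hW.1 hW.2.1

lemma vnPsi_eq_of_isHermitian {W : Matrix (Fin d) (Fin d) ℝ} (hW : W.IsHermitian) :
    vnPsi W = 1 / 4 * ((cfc (fun x => x * Real.log x) W).trace + Real.log d) := by
  rw [vnPsi, mul_matLog_eq_cfc hW]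

lemma log_one_div_sub_add_log (hkd : k < d) :
    Real.log (1 / ((d : ℝ) - k)) + Real.log d = Real.log ((d : ℝ) / ((d : ℝ) - k)) := by
  have hdk : (0 : ℝ) < d - k := sub_pos.mpr (by exact_mod_cast hkd)
  have hd : (d : ℝ) ≠ 0 := Nat.cast_ne_zero.mpr (by omega)
  rw [add_comm, ← Real.log_mul hd (by positivity), mul_one_div]

lemma vnPsi_le_of_mem_feasWK (hkd : k < d) {W : Matrix (Fin d) (Fin d) ℝ} (hW : W ∈ feasWK d k) :
    vnPsi W ≤ 1 / 4 * Real.log ((d : ℝ) / ((d : ℝ) - k)) := by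
  have hsa : IsSelfAdjoint W := hW.1.1.isSelfAdjoint
  have hle := Matrix.trace_mono
    (cfc_mul_log_le_of_spectrum_subset_Icc hsa (spectrum_subset_Icc_of_mem_feasWK hW))
  rw [Matrix.trace_smul, hW.2.2, smul_eq_mul, mul_one] at hle
  rw [vnPsi_eq_of_isHermitian hW.1.1, ← log_one_div_sub_add_log hkd]
  linarith

noncomputable def extremalWK (d k : ℕ) : Matrix (Fin d) (Fin d) ℝ :=
  Matrix.diagonal fun i : Fin d => if (i : ℕ) < d - k then 1 / ((d : ℝ) - (k : ℝ)) else 0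

lemma trace_extremalWK (hkd : k < d) : (extremalWK d k).trace = 1 := by
  have hdk : (0 : ℝ) < d - k := sub_pos.mpr (by exact_mod_cast hkd)
  rw [extremalWK, Matrix.trace_diagonal, Finset.sum_ite, Finset.sum_const_zero, add_zero,
    Finset.sum_const, Fin.card_filter_val_lt, min_eq_right (Nat.sub_le d k), nsmul_eq_mul,
    Nat.cast_sub hkd.le]
  field_simp

lemma extremalWK_mem_feasWK (hkd : k < d) : extremalWK d k ∈ feasWK d k := by
  refine ⟨Matrix.posSemidef_diagonal_iff.mpr fun i => ?_, ?_, trace_extremalWK hkd⟩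
  · split_ifs <;> simp [hkd.le]
  · rw [extremalWK, Matrix.smul_one_eq_diagonal, Matrix.diagonal_sub]
    refine Matrix.posSemidef_diagonal_iff.mpr fun i => ?_
    split_ifs <;> simp [hkd.le]

lemma spectrum_extremalWK_subset : spectrum ℝ (extremalWK d k) ⊆ {0, 1 / ((d : ℝ) - k)} := by
  rw [extremalWK, spectrum_diagonal]
  rintro _ ⟨i, rfl⟩
  dsimp only
  split_ifs <;> simp

lemma vnPsi_extremalWK (hkd : k < d) :
    vnPsi (extremalWK d k) = 1 / 4 * Real.log ((d : ℝ) / ((d : ℝ) - k)) := by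
  have hW := extremalWK_mem_feasWK hkd
  rw [vnPsi_eq_of_isHermitian hW.1.1, cfc_mul_log_eq_of_spectrum_subset_pair hW.1.1.isSelfAdjoint
    spectrum_extremalWK_subset, Matrix.trace_smul, trace_extremalWK hkd, smul_eq_mul, mul_one,
    log_one_div_sub_add_log hkd]

end WarmuthKuzmin

theorem stmt19_general (d k : ℕ) (hkd : k < d) :
    (∀ W ∈ feasWK d k,
      vnPsi W ≤ (1 / 4 : ℝ) * Real.log ((d : ℝ) / ((d : ℝ) - (k : ℝ)))) ∧
    ((Matrix.diagonal (fun i : Fin d =>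
        if (i : ℕ) < d - k then 1 / ((d : ℝ) - (k : ℝ)) else 0)) ∈ feasWK d k ∧
      vnPsi (Matrix.diagonal (fun i : Fin d =>
          if (i : ℕ) < d - k then 1 / ((d : ℝ) - (k : ℝ)) else 0)) =
        (1 / 4 : ℝ) * Real.log ((d : ℝ) / ((d : ℝ) - (k : ℝ)))) ∧
    (1 / 4 : ℝ) * Real.log ((d : ℝ) / ((d : ℝ) - (k : ℝ))) ≤
      (1 / 4 : ℝ) * ((k : ℝ) / ((d : ℝ) - (k : ℝ))) :=
  ⟨fun _ hW => vnPsi_le_of_mem_feasWK hkd hW,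
    ⟨extremalWK_mem_feasWK hkd, vnPsi_extremalWK hkd⟩,
    by gcongr; exact Real.log_div_sub_le k.cast_nonneg (by exact_mod_cast hkd)⟩

/-- Over the Warmuth–Kuzmin feasible set, the maximum of `Ψ` is
`(1/4)·log(d/(d-k))`, attained at a matrix with exactly `d-k` eigenvalues equal to
`1/(d-k)`; moreover this bound is at most `(1/4)·k/(d-k)`. -/
theorem stmt19 (d k : ℕ) (hk : 0 < k) (hkd : k < d) :
    (∀ W ∈ feasWK d k,
      vnPsi W ≤ (1 / 4 : ℝ) * Real.log ((d : ℝ) / ((d : ℝ) - (k : ℝ)))) ∧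
    ((Matrix.diagonal (fun i : Fin d =>
        if (i : ℕ) < d - k then 1 / ((d : ℝ) - (k : ℝ)) else 0)) ∈ feasWK d k ∧
      vnPsi (Matrix.diagonal (fun i : Fin d =>
          if (i : ℕ) < d - k then 1 / ((d : ℝ) - (k : ℝ)) else 0)) =
        (1 / 4 : ℝ) * Real.log ((d : ℝ) / ((d : ℝ) - (k : ℝ)))) ∧
    (1 / 4 : ℝ) * Real.log ((d : ℝ) / ((d : ℝ) - (k : ℝ))) ≤
      (1 / 4 : ℝ) * ((k : ℝ) / ((d : ℝ) - (k : ℝ))) :=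
  stmt19_general d k hkd
end
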